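/- arXiv:2109.00111 — 9 statements merged into one kernel-verified Lean document; each statement's English description precedes it below -/
import Mathlib

section
/- Let k be a commutative ring, A an associative unital k-algebra, x_1,…,x_n ∈ A, and q : Fin n → Fin n → kˣ units with q i i = 1 and (q i j)·(q j i) = 1 such that x_i x_j = (q i j)·x_j x_i in A for all i, j. Then for all α, β ∈ ℕ^n one has (x_1^{α_1}⋯x_n^{α_n})·(x_1^{β_1}⋯x_n^{β_n}) = (∏_{i > j} (q i j)^{α_i·β_j})·x_1^{α_1+β_1}⋯x_n^{α_n+β_n}. -/
section
variable {k A : Type*} [CommRing k] [Ring A] [Algebra k A] {n : ℕ}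
variable (q : Fin n → Fin n → kˣ) (x : Fin n → A)
variable (hcomm : ∀ i j, x i * x j = algebraMap k A (q i j) * (x j * x i))

include hcomm

lemma omm_aux1 (i j : Fin n) (b : ℕ) :
    x i * x j ^ b = algebraMap k A ((q i j : k) ^ b) * (x j ^ b * x i) := by
  induction b with
  | zero => simp
  | succ b ih =>
      calc x i * x j ^ (b + 1)
          = (x i * x j ^ b) * x j := by rw [pow_succ, mul_assoc]
        _ = algebraMap k A ((q i j : k) ^ b) * (x j ^ b * (x i * x j)) := by
              rw [ih]; simp [mul_assoc]
        _ = algebraMap k A ((q i j : k) ^ b) *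
              (x j ^ b * (algebraMap k A (q i j) * (x j * x i))) := by rw [hcomm i j]
        _ = algebraMap k A ((q i j : k) ^ b) *
              (algebraMap k A (q i j) * (x j ^ b * (x j * x i))) := by
              rw [← mul_assoc (x j ^ b), ← Algebra.commutes ((q i j : k)) (x j ^ b), mul_assoc]
        _ = algebraMap k A ((q i j : k) ^ (b + 1)) * (x j ^ (b + 1) * x i) := by
              rw [← mul_assoc, ← map_mul, ← pow_succ]
              simp [mul_assoc, pow_succ]

lemma omm_aux2 (i j : Fin n) (a b : ℕ) :
    x i ^ a * x j ^ b = algebraMap k A ((q i j : k) ^ (a * b)) * (x j ^ b * x i ^ a) := by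
  induction a with
  | zero => simp
  | succ a ih =>
      calc x i ^ (a + 1) * x j ^ b
          = x i ^ a * (x i * x j ^ b) := by rw [pow_succ, mul_assoc]
        _ = x i ^ a * (algebraMap k A ((q i j : k) ^ b) * (x j ^ b * x i)) := by
              rw [omm_aux1 q x hcomm i j b]
        _ = algebraMap k A ((q i j : k) ^ b) * (x i ^ a * x j ^ b * x i) := by
              rw [← mul_assoc, ← Algebra.commutes ((q i j : k) ^ b) (x i ^ a)]
              simp [mul_assoc]
        _ = algebraMap k A ((q i j : k) ^ b) *
              (algebraMap k A ((q i j : k) ^ (a * b)) * (x j ^ b * x i ^ a) * x i) := by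
              rw [ih]
        _ = algebraMap k A ((q i j : k) ^ ((a + 1) * b)) * (x j ^ b * x i ^ (a + 1)) := by
              rw [← mul_assoc, ← mul_assoc, ← map_mul, ← pow_add, mul_assoc, mul_assoc (x j ^ b), ← pow_succ]
              have h : b + a * b = (a + 1) * b := by ring
              rw [h]

lemma omm_aux3 (α : Fin n → ℕ) (L : List (Fin n)) (m : Fin n) (b : ℕ) :
    (L.map fun i => x i ^ α i).prod * x m ^ b =
      algebraMap k A ((L.map fun i => (q i m : k) ^ (α i * b)).prod) *
        (x m ^ b * (L.map fun i => x i ^ α i).prod) := by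
  induction L with
  | nil => simp
  | cons hd tl ih =>
      simp only [List.map_cons, List.prod_cons, map_mul]
      rw [mul_assoc, ih, ← mul_assoc, ← Algebra.commutes, mul_assoc, ← mul_assoc (x hd ^ α hd),
        omm_aux2 q x hcomm hd m (α hd) b]
      rw [← mul_assoc, ← mul_assoc, ← map_mul, ← map_mul,
        mul_comm ((List.map (fun i => (q i m : k) ^ (α i * b)) tl).prod)]
      simp [mul_assoc]

end

section
variable {k A : Type*} [CommRing k] [Ring A] [Algebra k A]

lemma omm_central_left (c : k) (a b : A) :
    a * (algebraMap k A c * b) = algebraMap k A c * (a * b) := by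
  rw [← mul_assoc, ← Algebra.commutes, mul_assoc]

lemma omm_assemble (x0a x0b Pa Pb Pab : A) (c1 c2 C : k)
    (h1 : Pa * x0b = algebraMap k A c1 * (x0b * Pa))
    (h2 : Pa * Pb = algebraMap k A c2 * Pab)
    (hc : C = c1 * c2) :
    (x0a * Pa) * (x0b * Pb) = algebraMap k A C * ((x0a * x0b) * Pab) := by
  rw [hc]
  have step1 : Pa * (x0b * Pb) = algebraMap k A c1 * (x0b * (Pa * Pb)) := by
    calc Pa * (x0b * Pb) = (Pa * x0b) * Pb := (mul_assoc _ _ _).symm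
      _ = (algebraMap k A c1 * (x0b * Pa)) * Pb := by rw [h1]
      _ = algebraMap k A c1 * (x0b * (Pa * Pb)) := by rw [mul_assoc, mul_assoc]
  calc (x0a * Pa) * (x0b * Pb) = x0a * (Pa * (x0b * Pb)) := mul_assoc _ _ _
    _ = x0a * (algebraMap k A c1 * (x0b * (Pa * Pb))) := by rw [step1]
    _ = algebraMap k A c1 * (x0a * (x0b * (Pa * Pb))) := omm_central_left _ _ _
    _ = algebraMap k A c1 * (x0a * (x0b * (algebraMap k A c2 * Pab))) := by rw [h2]
    _ = algebraMap k A c1 * (x0a * (algebraMap k A c2 * (x0b * Pab))) := by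
        rw [omm_central_left c2 x0b Pab]
    _ = algebraMap k A c1 * (algebraMap k A c2 * (x0a * (x0b * Pab))) := by
        rw [omm_central_left c2 x0a (x0b * Pab)]
    _ = algebraMap k A (c1 * c2) * ((x0a * x0b) * Pab) := by
        rw [← mul_assoc (algebraMap k A c1), ← map_mul, ← mul_assoc x0a]

theorem omm_main (n : ℕ) :
    ∀ (q : Fin n → Fin n → kˣ) (x : Fin n → A),
      (∀ i j, x i * x j = algebraMap k A (q i j) * (x j * x i)) →
      ∀ (α β : Fin n → ℕ),
      ((List.finRange n).map fun i => x i ^ α i).prod *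
          ((List.finRange n).map fun i => x i ^ β i).prod =
        algebraMap k A
            (∏ i : Fin n, ∏ j ∈ Finset.univ.filter (fun j => j < i),
              (q i j : k) ^ (α i * β j)) *
          ((List.finRange n).map fun i => x i ^ (α i + β i)).prod := by
  induction n with
  | zero => intro q x hcomm α β; simp
  | succ n ih =>
    intro q x hcomm α β
    have haux3 := omm_aux3 q x hcomm α ((List.finRange n).map Fin.succ) 0 (β 0)
    simp only [List.map_map, Function.comp_def] at haux3
    have hih := ih (fun i j => q i.succ j.succ) (fun i => x i.succ)
      (fun i j => hcomm i.succ j.succ) (fun i => α i.succ) (fun i => β i.succ)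
    have hC : (∏ i : Fin (n+1), ∏ j ∈ Finset.univ.filter (fun j => j < i),
          (q i j : k) ^ (α i * β j))
        = (∏ i : Fin n, (q i.succ 0 : k) ^ (α i.succ * β 0)) *
          (∏ i : Fin n, ∏ j ∈ Finset.univ.filter (fun j => j < i),
            (q i.succ j.succ : k) ^ (α i.succ * β j.succ)) := by
      rw [Fin.prod_univ_succ]
      have h0 : (Finset.univ.filter (fun j => j < (0 : Fin (n+1)))) = ∅ := by
        simp [Finset.filter_eq_empty_iff]
      rw [h0]
      simp only [Finset.prod_empty, one_mul]
      rw [← Finset.prod_mul_distrib]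
      refine Finset.prod_congr rfl fun i _ => ?_
      rw [Finset.prod_filter, Finset.prod_filter, Fin.prod_univ_succ]
      simp [Fin.succ_lt_succ_iff, Fin.succ_pos]
    rw [Fin.prod_univ_def] at hC
    simp only [List.finRange_succ, List.map_cons, List.prod_cons, List.map_map,
      Function.comp_def]
    rw [pow_add (x 0) (α 0) (β 0)]
    exact omm_assemble _ _ _ _ _ _ _ _ haux3 hih hC
end



/-- in a `k`-algebra whose chosen elements `x i` skew-commute with central
unit parameters `q i j` (with `q i i = 1` and `q i j · q j i = 1`), the product of two
ordered monomials equals the ordered monomial of the sum of the exponents times the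
constant `C(α, β) = ∏_{i > j} (q i j)^(α_i·β_j)`. -/
theorem ordered_monomial_mul {k A : Type*} [CommRing k] [Ring A] [Algebra k A] {n : ℕ}
    (q : Fin n → Fin n → kˣ) (x : Fin n → A)
    (hqii : ∀ i, q i i = 1) (hqsym : ∀ i j, q i j * q j i = 1)
    (hcomm : ∀ i j, x i * x j = algebraMap k A (q i j) * (x j * x i))
    (α β : Fin n → ℕ) :
    ((List.finRange n).map fun i => x i ^ α i).prod *
        ((List.finRange n).map fun i => x i ^ β i).prod =
      algebraMap k A
          (∏ i : Fin n, ∏ j ∈ Finset.univ.filter (fun j => j < i),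
            (q i j : k) ^ (α i * β j)) *
        ((List.finRange n).map fun i => x i ^ (α i + β i)).prod := by
  exact omm_main n q x hcomm α β
end

section
/- Every monomial of R is normal: for every a ∈ ℕ^n there is a k-algebra homomorphism σ_a : R → R with σ_a(x_j) = χ(a, ε_j)·x_j for each j (where ε_j ∈ ℕ^n is the j-th standard basis vector), and x^a·f = σ_a(f)·x^a holds for all f ∈ R. -/
/-- The bicharacter `χ(α, β) = ∏_{i, j} (q i j)^(α_i·β_j)` on `ℤ^n`. -/
def skewChi {k : Type*} [CommRing k] {n : ℕ} (q : Fin n → Fin n → kˣ)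
    (α β : Fin n → ℤ) : kˣ :=
  ∏ i : Fin n, ∏ j : Fin n, q i j ^ (α i * β j)

/-- The defining relations `x_i x_j = (q i j)·x_j x_i` of the skew polynomial ring. -/
inductive SkewRel (k : Type*) [CommRing k] (n : ℕ) (q : Fin n → Fin n → kˣ) :
    FreeAlgebra k (Fin n) → FreeAlgebra k (Fin n) → Prop
  | rel (i j : Fin n) :
      SkewRel k n q (FreeAlgebra.ι k i * FreeAlgebra.ι k j)
        ((q i j : k) • (FreeAlgebra.ι k j * FreeAlgebra.ι k i))

/-- The skew polynomial ring `R = k_q[x_1, …, x_n]`, as a quotient of the free algebra. -/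
abbrev SkewPoly (k : Type*) [CommRing k] (n : ℕ) (q : Fin n → Fin n → kˣ) :=
  RingQuot (SkewRel k n q)

/-- The variable `x_i` of the skew polynomial ring. -/
noncomputable def skewX {k : Type*} [CommRing k] {n : ℕ} (q : Fin n → Fin n → kˣ)
    (i : Fin n) : SkewPoly k n q :=
  RingQuot.mkAlgHom k (SkewRel k n q) (FreeAlgebra.ι k i)

/-- The ordered monomial `x^a = x_1^{a_1}⋯x_n^{a_n}` of the skew polynomial ring. -/
noncomputable def skewMono {k : Type*} [CommRing k] {n : ℕ} (q : Fin n → Fin n → kˣ)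
    (a : Fin n → ℕ) : SkewPoly k n q :=
  ((List.finRange n).map fun i => skewX q i ^ a i).prod

section Aux
variable {k : Type*} [CommRing k] {n : ℕ} (q : Fin n → Fin n → kˣ)

lemma skewX_comm (i j : Fin n) :
    skewX q i * skewX q j = (q i j : k) • (skewX q j * skewX q i) := by
  have := RingQuot.mkAlgHom_rel k (SkewRel.rel (k := k) (n := n) (q := q) i j)
  simpa [skewX, map_mul, map_smul] using this

lemma skewX_pow_comm (i j : Fin n) (m : ℕ) :
    skewX q i ^ m * skewX q j = ((q i j : k) ^ m) • (skewX q j * skewX q i ^ m) := by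
  induction m with
  | zero => simp
  | succ m ih =>
    rw [pow_succ, mul_assoc, skewX_comm, mul_smul_comm, ← mul_assoc, ih,
      smul_mul_assoc, smul_smul, mul_assoc, ← pow_succ']

lemma skewList_comm (a : Fin n → ℕ) (j : Fin n) (L : List (Fin n)) :
    (L.map fun i => skewX q i ^ a i).prod * skewX q j
      = ((L.map fun i => (q i j : k) ^ a i).prod) •
          (skewX q j * (L.map fun i => skewX q i ^ a i).prod) := by
  induction L with
  | nil => simp
  | cons i L ih =>
    simp only [List.map_cons, List.prod_cons]
    rw [mul_assoc, ih, mul_smul_comm, ← mul_assoc, skewX_pow_comm, smul_mul_assoc,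
      smul_smul, mul_assoc, mul_comm]

lemma skewChi_single (a : Fin n → ℕ) (j : Fin n) :
    skewChi q (fun i => (a i : ℤ)) (Pi.single j 1) = ∏ i, q i j ^ a i := by
  unfold skewChi
  refine Finset.prod_congr rfl fun i _ => ?_
  rw [Finset.prod_eq_single j]
  · simp
  · intro m _ hm
    simp [Pi.single_apply, hm]
  · simp

end Aux

/-- every monomial `x^a` of `R = k_q[x_1,…,x_n]` is normal: there is a
`k`-algebra endomorphism `σ_a` of `R` with `σ_a(x_j) = χ(a, ε_j)·x_j` for each `j`,
and `x^a·f = σ_a(f)·x^a` for all `f ∈ R`. -/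
theorem skewMono_isNormal {k : Type*} [CommRing k] {n : ℕ} (hn : 0 < n)
    (q : Fin n → Fin n → kˣ)
    (hqii : ∀ i, q i i = 1) (hqsym : ∀ i j, q i j * q j i = 1)
    (a : Fin n → ℕ) :
    ∃ σ : SkewPoly k n q →ₐ[k] SkewPoly k n q,
      (∀ j : Fin n,
        σ (skewX q j) =
          algebraMap k (SkewPoly k n q)
              (skewChi q (fun i => (a i : ℤ)) (Pi.single j 1)) *
            skewX q j) ∧
      ∀ f : SkewPoly k n q, skewMono q a * f = σ f * skewMono q a := by
  set c : Fin n → kˣ := fun j => ∏ i, q i j ^ a i with hc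
  set φ : FreeAlgebra k (Fin n) →ₐ[k] SkewPoly k n q :=
    FreeAlgebra.lift k (fun j => ((c j : k)) • skewX q j) with hφ
  have hrel : ∀ ⦃x y⦄, SkewRel k n q x y → φ x = φ y := by
    rintro x y ⟨i, j⟩
    simp only [hφ, map_mul, map_smul, FreeAlgebra.lift_ι_apply]
    rw [smul_mul_smul_comm, skewX_comm, smul_smul, smul_mul_smul_comm, smul_smul]
    congr 1
    ring
  have hσx : ∀ j, (RingQuot.liftAlgHom k ⟨φ, hrel⟩) (skewX q j) = (c j : k) • skewX q j := by
    intro j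
    rw [skewX, RingQuot.liftAlgHom_mkAlgHom_apply, hφ, FreeAlgebra.lift_ι_apply]
    rfl
  refine ⟨RingQuot.liftAlgHom k ⟨φ, hrel⟩, ?_, ?_⟩
  · intro j
    rw [hσx, skewChi_single, Algebra.smul_def]
  · intro f
    obtain ⟨g, rfl⟩ := RingQuot.mkAlgHom_surjective k (SkewRel k n q) f
    induction g using FreeAlgebra.induction with
    | grade0 r =>
      simp only [AlgHom.commutes]
      rw [Algebra.commutes]
    | grade1 j =>
      have hx : RingQuot.mkAlgHom k (SkewRel k n q) (FreeAlgebra.ι k j) = skewX q j := rfl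
      rw [hx, hσx]
      rw [skewMono, skewList_comm, smul_mul_assoc]
      congr 1
      rw [hc]
      push_cast [Fin.prod_univ_def]
      rw [show ((List.map (fun i => q i j ^ a i) (List.finRange n)).prod : k)
            = (Units.coeHom k) (List.map (fun i => q i j ^ a i) (List.finRange n)).prod from rfl,
        map_list_prod, List.map_map]
      simp only [Function.comp_def, Units.coeHom_apply, Units.val_pow_eq_pow_val]

    | mul x y hx hy =>
      rw [map_mul, map_mul, ← mul_assoc, hx, mul_assoc, hy, ← mul_assoc]
    | add x y hx hy =>
      rw [map_add, map_add, mul_add, hx, hy, add_mul]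
end

section
/- For all α, β, γ, δ ∈ ℕ^n with δ ≤ β, δ ≤ γ, β ≤ α and γ ≤ α (componentwise), one has C(β, α − β)·C(δ, β − δ)·C(γ − δ, α − γ) = C(γ, α − γ)·C(δ, γ − δ)·C(β − δ, α − β). -/
/-- The bicharacter `C(α, β) = ∏_{i > j} (q i j)^(α_i·β_j)` on `ℤ^n`. -/
def skewC {k : Type*} [CommRing k] {n : ℕ} (q : Fin n → Fin n → kˣ)
    (α β : Fin n → ℤ) : kˣ :=
  ∏ i : Fin n, ∏ j ∈ Finset.univ.filter (fun j => j < i), q i j ^ (α i * β j)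

/-- Coercion of an exponent vector in `ℕ^n` to `ℤ^n`. -/
def expZ {n : ℕ} (a : Fin n → ℕ) : Fin n → ℤ := fun i => (a i : ℤ)

/-- the key divisibility identity for `C`: if `x^δ` divides `x^β` and `x^γ`,
and `x^β`, `x^γ` divide `x^α`, then
`C(β, α−β)·C(δ, β−δ)·C(γ−δ, α−γ) = C(γ, α−γ)·C(δ, γ−δ)·C(β−δ, α−β)`. -/
theorem skewC_divisibility_identity {k : Type*} [CommRing k] {n : ℕ} (hn : 0 < n)
    (q : Fin n → Fin n → kˣ)
    (hqii : ∀ i, q i i = 1) (hqsym : ∀ i j, q i j * q j i = 1)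
    (α β γ δ : Fin n → ℕ) (hδβ : δ ≤ β) (hδγ : δ ≤ γ) (hβα : β ≤ α) (hγα : γ ≤ α) :
    skewC q (expZ β) (expZ α - expZ β) * skewC q (expZ δ) (expZ β - expZ δ) *
        skewC q (expZ γ - expZ δ) (expZ α - expZ γ) =
      skewC q (expZ γ) (expZ α - expZ γ) * skewC q (expZ δ) (expZ γ - expZ δ) *
        skewC q (expZ β - expZ δ) (expZ α - expZ β) := by
  simp only [skewC, ← Finset.prod_mul_distrib, ← zpow_add]
  refine Finset.prod_congr rfl fun i _ => Finset.prod_congr rfl fun j _ => ?_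
  congr 1
  simp only [Pi.sub_apply, expZ]
  ring
end

section
/- Let s ≥ 1, a : Fin s → ℕ^n, F ⊆ Fin s, and let i, j ∈ F be distinct. Writing a_G := ⊔_{l∈G} a_l (componentwise maximum) for G ⊆ Fin s, define C̃_{i,j} := C(a_{F∖{i,j}}, a_{F∖{i}} − a_{F∖{i,j}})⁻¹ · C(a_{F∖{i}}, a_F − a_{F∖{i}})⁻¹ · C(a_{F∖{i}} − a_{F∖{i,j}}, a_F − a_{F∖{i}}). Then C̃_{i,j} = C̃_{j,i}. -/
/-- The exponent vector (in `ℤ^n`) of the least common multiple `m_G` of the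
monomials `x^{a_l}`, `l ∈ G`: the componentwise maximum of the `a_l`. -/
def lcmExpZ {n s : ℕ} (a : Fin s → Fin n → ℕ) (G : Finset (Fin s)) : Fin n → ℤ :=
  fun t => ((G.sup fun l => a l t : ℕ) : ℤ)

/-- The coefficient `C̃_{i,j}` appearing in `∂²(e_F)` for the skew Taylor complex. -/
def taylorCtilde {k : Type*} [CommRing k] {n s : ℕ} (q : Fin n → Fin n → kˣ)
    (a : Fin s → Fin n → ℕ) (F : Finset (Fin s)) (i j : Fin s) : kˣ :=
  (skewC q (lcmExpZ a (F \ {i, j})) (lcmExpZ a (F \ {i}) - lcmExpZ a (F \ {i, j})))⁻¹ *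
    (skewC q (lcmExpZ a (F \ {i})) (lcmExpZ a F - lcmExpZ a (F \ {i})))⁻¹ *
    skewC q (lcmExpZ a (F \ {i}) - lcmExpZ a (F \ {i, j}))
      (lcmExpZ a F - lcmExpZ a (F \ {i}))


lemma skewC_add_right {k : Type*} [CommRing k] {n : ℕ} (q : Fin n → Fin n → kˣ)
    (α β γ : Fin n → ℤ) : skewC q α (β + γ) = skewC q α β * skewC q α γ := by
  simp [skewC, ← Finset.prod_mul_distrib, mul_add, zpow_add]

lemma skewC_add_left {k : Type*} [CommRing k] {n : ℕ} (q : Fin n → Fin n → kˣ)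
    (α β γ : Fin n → ℤ) : skewC q (α + β) γ = skewC q α γ * skewC q β γ := by
  simp [skewC, ← Finset.prod_mul_distrib, add_mul, zpow_add]

lemma taylorCtilde_eq {k : Type*} [CommRing k] {n s : ℕ} (q : Fin n → Fin n → kˣ)
    (a : Fin s → Fin n → ℕ) (F : Finset (Fin s)) (i j : Fin s) :
    taylorCtilde q a F i j =
      (skewC q (lcmExpZ a (F \ {i, j})) (lcmExpZ a F - lcmExpZ a (F \ {i, j})))⁻¹ := by
  set A := lcmExpZ a (F \ {i, j})
  set B := lcmExpZ a (F \ {i})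
  set D := lcmExpZ a F
  have h1 : skewC q (B - A) (D - B) * skewC q A (D - B) = skewC q B (D - B) := by
    rw [← skewC_add_left]; ring_nf
  have h2 : skewC q A (B - A) * skewC q A (D - B) = skewC q A (D - A) := by
    rw [← skewC_add_right]; ring_nf
  rw [taylorCtilde, ← h1, ← h2]
  group
  change skewC q A (B - A) ^ (-1) * skewC q A (D - B) ^ (-1) * skewC q (B - A) (D - B) ^ (-1) *
      skewC q (B - A) (-B + D) = _
  rw [neg_add_eq_sub]
  simp only [zpow_neg, zpow_one]
  rw [inv_mul_cancel_right]
  exact mul_comm _ _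

/-- the symmetry `C̃_{i,j} = C̃_{j,i}`, the key coefficient identity in
the proof that the skew Taylor complex is a complex. -/
theorem taylorCtilde_symm {k : Type*} [CommRing k] {n s : ℕ} (hn : 0 < n) (hs : 1 ≤ s)
    (q : Fin n → Fin n → kˣ)
    (hqii : ∀ i, q i i = 1) (hqsym : ∀ i j, q i j * q j i = 1)
    (a : Fin s → Fin n → ℕ) (F : Finset (Fin s)) (i j : Fin s)
    (hi : i ∈ F) (hj : j ∈ F) (hij : i ≠ j) :
    taylorCtilde q a F i j = taylorCtilde q a F j i := by
  rw [taylorCtilde_eq, taylorCtilde_eq]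
  have : ({i, j} : Finset (Fin s)) = {j, i} := Finset.pair_comm i j
  rw [this]
end

section
/- Let k be a field and let I be the two-sided ideal of R generated by the monomials x^{a_1},…,x^{a_s}. Then the augmented skew Taylor complex 0 → T_s → T_{s−1} → ⋯ → T_1 → R → R/I → 0 is exact; that is, T is a free resolution of the right R-module R/I: the homology of T vanishes in degrees ≥ 1 and the cokernel of ∂_1 : T_1 → R is R/I. -/
/-- The exponent vector `a_G` (componentwise maximum) of the least common multiple of
the monomials `x^{a_l}`, `l ∈ G`. -/
def lcmExp {n s : ℕ} (a : Fin s → Fin n → ℕ) (G : Finset (Fin s)) : Fin n → ℕ :=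
  fun t => G.sup fun l => a l t

/-- The sign exponent `σ(F, i) = |{j ∈ F : j < i}|`. -/
def taylorSign {s : ℕ} (F : Finset (Fin s)) (i : Fin s) : ℕ :=
  (F.filter fun j => j < i).card

/-- The Taylor differential on a basis element:
`∂(e_F) = Σ_{i∈F} e_{F∖{i}}·(−1)^{σ(F,i)}·C(a_{F∖{i}}, a_F − a_{F∖{i}})⁻¹·x^{a_F − a_{F∖{i}}}`.
The total Taylor module is realized as the free right module `Finset (Fin s) →₀ R`,
with `e_F = Finsupp.single F 1`; its degree-`p` part `T_p` has basis `{e_F : |F| = p}`. -/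
noncomputable def taylorBdry {k : Type*} [CommRing k] {n s : ℕ}
    (q : Fin n → Fin n → kˣ) (a : Fin s → Fin n → ℕ) (F : Finset (Fin s)) :
    Finset (Fin s) →₀ SkewPoly k n q :=
  ∑ i ∈ F, Finsupp.single (F.erase i)
    (((-1 : SkewPoly k n q) ^ taylorSign F i) *
      algebraMap k (SkewPoly k n q)
        (((skewC q (fun t => (lcmExp a (F.erase i) t : ℤ))
            (fun t => (lcmExp a F t : ℤ) - (lcmExp a (F.erase i) t : ℤ)))⁻¹ :
          kˣ) : k) *
      skewMono q (lcmExp a F - lcmExp a (F.erase i)))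

/-- The Taylor differential, extended to the whole module by right `R`-linearity. -/
noncomputable def taylorDiff {k : Type*} [CommRing k] {n s : ℕ}
    (q : Fin n → Fin n → kˣ) (a : Fin s → Fin n → ℕ)
    (v : Finset (Fin s) →₀ SkewPoly k n q) : Finset (Fin s) →₀ SkewPoly k n q :=
  v.sum fun F r => Finsupp.mapRange (· * r) (zero_mul r) (taylorBdry q a F)


namespace SkewAux
open Finset

variable {k : Type*} [Field k] {n : ℕ} (q : Fin n → Fin n → kˣ)

/-- The ℕ-version of the bicharacter, valued in `kˣ`. -/
def CC (u v : Fin n → ℕ) : kˣ :=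
  ∏ i : Fin n, ∏ j ∈ Finset.univ.filter (fun j => j < i), q i j ^ (u i * v j)

lemma skewC_cast (u v : Fin n → ℕ) :
    skewC q (fun t => (u t : ℤ)) (fun t => (v t : ℤ)) = CC q u v := by
  unfold skewC CC
  refine Finset.prod_congr rfl fun i _ => Finset.prod_congr rfl fun j _ => ?_
  rw [← Nat.cast_mul, zpow_natCast]

lemma skewC_cast_sub (u v w : Fin n → ℕ) (h : ∀ t, w t ≤ v t) :
    skewC q (fun t => (u t : ℤ)) (fun t => (v t : ℤ) - (w t : ℤ)) = CC q u (v - w) := by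
  unfold skewC CC
  refine Finset.prod_congr rfl fun i _ => Finset.prod_congr rfl fun j _ => ?_
  show q i j ^ ((u i : ℤ) * ((v j : ℤ) - (w j : ℤ))) = _
  have hj : (v j : ℤ) - (w j : ℤ) = ((v - w) j : ℕ) := by
    have := h j; simp only [Pi.sub_apply]; omega
  rw [hj, ← Nat.cast_mul, zpow_natCast]

lemma CC_add_left (u u' v : Fin n → ℕ) : CC q (u + u') v = CC q u v * CC q u' v := by
  simp [CC, add_mul, pow_add, Finset.prod_mul_distrib]

lemma CC_add_right (u v v' : Fin n → ℕ) : CC q u (v + v') = CC q u v * CC q u v' := by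
  simp [CC, mul_add, pow_add, Finset.prod_mul_distrib]

lemma CC_zero_left (v : Fin n → ℕ) : CC q 0 v = 1 := by simp [CC]

lemma CC_zero_right (u : Fin n → ℕ) : CC q u 0 = 1 := by simp [CC]

/-- list/finset product bridge -/
lemma prod_filter_list {M : Type*} [CommMonoid M] (P : Fin n → Prop) [DecidablePred P]
    (f : Fin n → M) :
    ∏ j ∈ Finset.univ.filter P, f j
      = (((List.finRange n).filter (fun j => decide (P j))).map f).prod := by
  rw [Finset.prod_filter, Fin.prod_univ_def]
  generalize (List.finRange n) = l
  induction l with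
  | nil => simp
  | cons c t ih =>
      by_cases h : P c <;> simp [h, ih]

end SkewAux
namespace SkewAux
open Finset

variable {k : Type*} [Field k] {n : ℕ} (q : Fin n → Fin n → kˣ)

/-- partial ordered products -/
noncomputable def prodl (l : List (Fin n)) (β : Fin n → ℕ) : SkewPoly k n q :=
  (l.map fun j => skewX q j ^ β j).prod

lemma skewMono_eq_prodl (β : Fin n → ℕ) :
    skewMono q β = prodl q (List.finRange n) β := rfl

lemma X_mul_X (i j : Fin n) :
    skewX q i * skewX q j = (q i j : k) • (skewX q j * skewX q i) := by
  have h := RingQuot.mkAlgHom_rel k (@SkewRel.rel k _ n q i j)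
  simpa [skewX, map_mul, map_smul] using h

lemma X_mul_pow (i j : Fin n) (m : ℕ) :
    skewX q i * skewX q j ^ m
      = ((q i j : k) ^ m) • (skewX q j ^ m * skewX q i) := by
  induction m with
  | zero => simp
  | succ m ih =>
      rw [pow_succ, ← mul_assoc, ih, smul_mul_assoc, mul_assoc, X_mul_X,
        mul_smul_comm, smul_smul, ← pow_succ, ← mul_assoc]

lemma prodl_congr {l : List (Fin n)} {β γ : Fin n → ℕ}
    (h : ∀ j ∈ l, β j = γ j) : prodl q l β = prodl q l γ := by
  unfold prodl
  exact congrArg List.prod (List.map_congr_left fun j hj => by rw [h j hj])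

lemma prodl_eq_one {l : List (Fin n)} {β : Fin n → ℕ}
    (h : ∀ j ∈ l, β j = 0) : prodl q l β = 1 := by
  induction l with
  | nil => rfl
  | cons c t ih =>
      have : prodl q (c :: t) β = skewX q c ^ β c * prodl q t β := rfl
      rw [this, h c (by simp), pow_zero, one_mul,
        ih fun j hj => h j (List.mem_cons_of_mem _ hj)]

lemma prodl_cons (c : Fin n) (t : List (Fin n)) (β : Fin n → ℕ) :
    prodl q (c :: t) β = skewX q c ^ β c * prodl q t β := rfl

lemma X_mul_prodl_sorted {l : List (Fin n)} (hl : l.Pairwise (· < ·))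
    {i : Fin n} (hi : i ∈ l) (β : Fin n → ℕ) :
    skewX q i * prodl q l β
      = (((l.filter fun j => decide (j < i)).map fun j => (q i j : k) ^ β j).prod)
          • prodl q l (β + Pi.single i 1) := by
  induction l with
  | nil => simp at hi
  | cons c t ih =>
      have hct : ∀ j ∈ t, c < j := fun j hj => (List.pairwise_cons.mp hl).1 j hj
      have ht : t.Pairwise (· < ·) := (List.pairwise_cons.mp hl).2
      rcases List.mem_cons.mp hi with rfl | hit
      · -- i = c : merge
        have hfil : (i :: t).filter (fun j => decide (j < i)) = [] := by
          refine List.filter_eq_nil_iff.mpr ?_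
          intro j hj
          rcases List.mem_cons.mp hj with rfl | hjt
          · simp
          · simpa using not_lt.mpr (hct j hjt).le
        rw [hfil]
        simp only [List.map_nil, List.prod_nil, one_smul, prodl_cons, ← mul_assoc]
        rw [← pow_succ']
        have h1 : (β + Pi.single i 1 : Fin n → ℕ) i = β i + 1 := by simp
        rw [h1]
        congr 1
        exact (prodl_congr q fun j hj => by
          have : j ≠ i := (hct j hj).ne'
          simp [Pi.single_eq_of_ne this]).symm
      · -- i ∈ t
        have hci : c < i := hct i hit
        have hfil : (c :: t).filter (fun j => decide (j < i))
            = c :: t.filter (fun j => decide (j < i)) :=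
          List.filter_cons_of_pos (by simpa using hci)
        rw [prodl_cons, ← mul_assoc, X_mul_pow, smul_mul_assoc, mul_assoc,
          ih ht hit, mul_smul_comm, smul_smul, hfil]
        have hc' : (β + Pi.single i 1 : Fin n → ℕ) c = β c := by
          simp [Pi.single_eq_of_ne hci.ne]
        rw [prodl_cons, hc']
        simp [← mul_assoc]

/-- the scalar `∏_{j<i} (q i j)^{β j}` -/
def fk (i : Fin n) (β : Fin n → ℕ) : k :=
  ∏ j ∈ Finset.univ.filter (fun j => j < i), (q i j : k) ^ β j

lemma fk_congr {i : Fin n} {β γ : Fin n → ℕ} (h : ∀ j, j < i → β j = γ j) :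
    fk q i β = fk q i γ :=
  Finset.prod_congr rfl fun j hj => by
    rw [h j (by simpa using (Finset.mem_filter.mp hj).2)]

lemma fk_zero (i : Fin n) : fk q i 0 = 1 := by simp [fk]

lemma fk_add (i : Fin n) (β γ : Fin n → ℕ) :
    fk q i (β + γ) = fk q i β * fk q i γ := by
  simp [fk, pow_add, Finset.prod_mul_distrib]

lemma fk_smul_single (i j : Fin n) (β : Fin n → ℕ) (m : ℕ) :
    fk q i (β + m • Pi.single j 1)
      = fk q i β * (if j < i then (q i j : k) ^ m else 1) := by
  rw [fk_add]
  congr 1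
  unfold fk
  have hfac : ∀ j' : Fin n, (q i j' : k) ^ ((m • Pi.single j (1:ℕ)) j')
      = (if j' = j then (q i j' : k) ^ m else 1) := by
    intro j'
    by_cases hj : j' = j
    · subst hj; simp
    · simp [Pi.single_eq_of_ne hj, hj]
  rw [Finset.prod_congr rfl fun j' _ => hfac j', Finset.prod_ite_eq']
  simp

lemma X_mul_skewMono (i : Fin n) (β : Fin n → ℕ) :
    skewX q i * skewMono q β = fk q i β • skewMono q (β + Pi.single i 1) := by
  rw [skewMono_eq_prodl, X_mul_prodl_sorted q (List.pairwise_lt_finRange n)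
    (List.mem_finRange i) β, ← skewMono_eq_prodl]
  congr 1

lemma pow_X_mul_skewMono (i : Fin n) (m : ℕ) (β : Fin n → ℕ) :
    skewX q i ^ m * skewMono q β
      = (fk q i β ^ m) • skewMono q (β + m • Pi.single i 1) := by
  induction m with
  | zero => simp
  | succ m ih =>
      rw [pow_succ', mul_assoc, ih, mul_smul_comm, X_mul_skewMono, smul_smul]
      have hfk : fk q i (β + m • Pi.single i 1) = fk q i β := by
        refine fk_congr q fun j hj => ?_
        simp [Pi.single_eq_of_ne hj.ne]
      have hv : β + m • Pi.single i 1 + Pi.single i 1 = β + (m+1) • Pi.single i 1 := by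
        rw [add_assoc]
        congr 1
        rw [succ_nsmul]
      rw [hfk, hv, ← pow_succ]

/-- offset vector of a list -/
def off (l : List (Fin n)) (α : Fin n → ℕ) : Fin n → ℕ :=
  (l.map fun i => α i • Pi.single i (1:ℕ)).sum

lemma off_nil (α : Fin n → ℕ) : off ([] : List (Fin n)) α = 0 := rfl

lemma off_cons (c : Fin n) (t : List (Fin n)) (α : Fin n → ℕ) :
    off (c :: t) α = α c • Pi.single c 1 + off t α := by
  unfold off; simp

lemma off_apply_not_mem {l : List (Fin n)} {α : Fin n → ℕ} {j : Fin n}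
    (h : j ∉ l) : off l α j = 0 := by
  induction l with
  | nil => rfl
  | cons c t ih =>
      rw [off_cons]
      have hjc : j ≠ c := fun e => h (e ▸ List.mem_cons_self)
      have hjt : j ∉ t := fun e => h (List.mem_cons_of_mem _ e)
      simp [Pi.single_eq_of_ne hjc, ih hjt]

lemma off_finRange (α : Fin n → ℕ) : off (List.finRange n) α = α := by
  funext j
  have key : ∀ l : List (Fin n), l.Nodup → j ∈ l → off l α j = α j := by
    intro l
    induction l with
    | nil => intro _ h; simp at h
    | cons c t ih =>
        intro hnd hm
        rw [off_cons]
        rcases List.mem_cons.mp hm with rfl | hjt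
        · have : j ∉ t := (List.nodup_cons.mp hnd).1
          simp [off_apply_not_mem this]
        · have hjc : j ≠ c := fun e => (List.nodup_cons.mp hnd).1 (e ▸ hjt)
          simp [Pi.single_eq_of_ne hjc, ih (List.nodup_cons.mp hnd).2 hjt]
  exact key _ (List.nodup_finRange n) (List.mem_finRange j)

lemma prodl_mul_skewMono {l : List (Fin n)} (hl : l.Pairwise (· < ·))
    (α β : Fin n → ℕ) :
    prodl q l α * skewMono q β
      = ((l.map fun i => fk q i β ^ α i).prod) • skewMono q (off l α + β) := by
  induction l with
  | nil =>
      show (1 : SkewPoly k n q) * _ = _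
      simp [off_nil]
  | cons i t ih =>
      have hit : ∀ j ∈ t, i < j := fun j hj => (List.pairwise_cons.mp hl).1 j hj
      have ht : t.Pairwise (· < ·) := (List.pairwise_cons.mp hl).2
      rw [prodl_cons, mul_assoc, ih ht, mul_smul_comm, pow_X_mul_skewMono, smul_smul]
      have hfk : fk q i (off t α + β) = fk q i β := by
        refine fk_congr q fun j hj => ?_
        have : j ∉ t := fun hm => absurd (hit j hm) (by omega)
        simp [off_apply_not_mem this]
      have hv : off t α + β + α i • Pi.single i 1 = off (i :: t) α + β := by
        rw [off_cons]; abel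
      rw [hfk, hv]
      simp [mul_comm]

lemma CC_val (α β : Fin n → ℕ) :
    ((CC q α β : kˣ) : k)
      = ∏ i : Fin n, ∏ j ∈ Finset.univ.filter (fun j => j < i),
          (q i j : k) ^ (α i * β j) := by
  unfold CC
  simp

lemma skewMono_mul (α β : Fin n → ℕ) :
    skewMono q α * skewMono q β
      = ((CC q α β : kˣ) : k) • skewMono q (α + β) := by
  rw [skewMono_eq_prodl q α, prodl_mul_skewMono q (List.pairwise_lt_finRange n),
    off_finRange]
  congr 1
  rw [CC_val, ← Fin.prod_univ_def]
  refine Finset.prod_congr rfl fun i _ => ?_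
  rw [fk, ← Finset.prod_pow]
  refine Finset.prod_congr rfl fun j _ => ?_
  rw [← pow_mul, mul_comm (β j)]

lemma skewMono_zero : skewMono q 0 = 1 := by
  rw [skewMono_eq_prodl]
  exact prodl_eq_one q fun j _ => rfl

lemma skewMono_singleExp (i : Fin n) :
    skewMono q (Pi.single i 1) = skewX q i := by
  have h := X_mul_skewMono q i 0
  rw [skewMono_zero, mul_one, fk_zero, one_smul, zero_add] at h
  exact h.symm

end SkewAux
namespace SkewAux
open Finset

variable {k : Type*} [Field k] {n : ℕ} (q : Fin n → Fin n → kˣ)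

lemma fk_eq_one {i : Fin n} {β : Fin n → ℕ} (h : ∀ j, j < i → β j = 0) :
    fk q i β = 1 := by
  rw [fk_congr q (γ := 0) h, fk_zero]

lemma fk_single (i j : Fin n) (γ : Fin n → ℕ) :
    fk q i (γ + Pi.single j 1) = fk q i γ * (if j < i then (q i j : k) else 1) := by
  have h := fk_smul_single q i j γ 1
  simpa using h

/-- the left-multiplication operator on the monomial model -/
noncomputable def L (i : Fin n) :
    ((Fin n → ℕ) →₀ k) →ₗ[k] ((Fin n → ℕ) →₀ k) :=
  Finsupp.lsum k fun γ => LinearMap.toSpanSingleton k _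
    (fk q i γ • Finsupp.single (γ + Pi.single i 1) 1)

lemma L_single (i : Fin n) (γ : Fin n → ℕ) (c : k) :
    L q i (Finsupp.single γ c)
      = (fk q i γ * c) • Finsupp.single (γ + Pi.single i 1) 1 := by
  rw [L, Finsupp.lsum_single, LinearMap.toSpanSingleton_apply, smul_smul, mul_comm]

lemma L_rel (hqii : ∀ i, q i i = 1) (hqsym : ∀ i j, q i j * q j i = 1)
    (i j : Fin n) :
    L q i ∘ₗ L q j = (q i j : k) • (L q j ∘ₗ L q i) := by
  refine Finsupp.lhom_ext fun γ c => ?_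
  simp only [LinearMap.comp_apply, LinearMap.smul_apply, L_single, map_smul]
  rw [smul_smul, smul_smul, smul_smul]
  have hv : γ + Pi.single j 1 + Pi.single i 1 = γ + Pi.single i 1 + Pi.single j 1 := by
    rw [add_assoc, add_assoc, add_comm (Pi.single j 1)]
  rw [hv]
  congr 1
  rw [fk_single, fk_single, mul_one, mul_one]
  rcases lt_trichotomy i j with h | h | h
  · have h1 : ¬ j < i := by omega
    have h2 : ((q i j : kˣ) : k) * ((q j i : kˣ) : k) = 1 := by
      rw [← Units.val_mul, hqsym i j, Units.val_one]
    simp only [if_pos h, if_neg h1]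
    calc fk q j γ * c * (fk q i γ * 1)
        = (↑(q i j) * ↑(q j i)) * (fk q j γ * c * fk q i γ) := by rw [h2]; ring
      _ = ↑(q i j) * (fk q i γ * c) * (fk q j γ * ↑(q j i)) := by ring
  · subst h
    have h1 : ¬ i < i := lt_irrefl i
    have h2 : ((q i i : kˣ) : k) = 1 := by rw [hqii, Units.val_one]
    simp only [if_neg h1, h2]
    ring
  · have h1 : ¬ i < j := by omega
    simp only [if_pos h, if_neg h1]
    ring

/-- the representation of the skew polynomial ring -/
noncomputable def Phi (hqii : ∀ i, q i i = 1) (hqsym : ∀ i j, q i j * q j i = 1) :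
    SkewPoly k n q →ₐ[k] Module.End k ((Fin n → ℕ) →₀ k) :=
  RingQuot.liftAlgHom k ⟨FreeAlgebra.lift k fun i => (L q i : Module.End k _),
    by
      intro x y h
      cases h with
      | rel i j =>
          simp only [map_mul, map_smul, FreeAlgebra.lift_ι_apply]
          rw [Module.End.mul_eq_comp, Module.End.mul_eq_comp]
          exact L_rel q hqii hqsym i j⟩

lemma Phi_X (hqii : ∀ i, q i i = 1) (hqsym : ∀ i j, q i j * q j i = 1) (i : Fin n) :
    Phi q hqii hqsym (skewX q i) = L q i := by
  unfold Phi skewX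
  rw [RingQuot.liftAlgHom_mkAlgHom_apply, FreeAlgebra.lift_ι_apply]

lemma L_pow (i : Fin n) (m : ℕ) (γ : Fin n → ℕ) (c : k) :
    ((L q i ^ m : Module.End k ((Fin n → ℕ) →₀ k))) (Finsupp.single γ c)
      = (fk q i γ ^ m * c) • Finsupp.single (γ + m • Pi.single i 1) 1 := by
  induction m with
  | zero => simp [Finsupp.smul_single]
  | succ m ih =>
      rw [pow_succ', Module.End.mul_eq_comp, LinearMap.comp_apply, ih, map_smul,
        L_single]
      have hfk : fk q i (γ + m • Pi.single i 1) = fk q i γ := by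
        refine fk_congr q fun j hj => ?_
        simp [Pi.single_eq_of_ne hj.ne]
      have hv : γ + m • Pi.single i 1 + Pi.single i 1 = γ + (m+1) • Pi.single i 1 := by
        rw [add_assoc]; congr 1; rw [succ_nsmul]
      rw [hfk, hv, smul_smul]
      ring_nf

lemma Phi_prodl (hqii : ∀ i, q i i = 1) (hqsym : ∀ i j, q i j * q j i = 1)
    {l : List (Fin n)} (hl : l.Pairwise (· < ·)) (α : Fin n → ℕ)
    {γ : Fin n → ℕ} (hγ : ∀ i ∈ l, ∀ j, j < i → γ j = 0) (c : k) :
    Phi q hqii hqsym (prodl q l α) (Finsupp.single γ c)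
      = Finsupp.single (γ + off l α) c := by
  induction l with
  | nil =>
      show Phi q hqii hqsym 1 _ = _
      rw [map_one]
      simp [off_nil]
  | cons i t ih =>
      have hit : ∀ j ∈ t, i < j := fun j hj => (List.pairwise_cons.mp hl).1 j hj
      have ht : t.Pairwise (· < ·) := (List.pairwise_cons.mp hl).2
      rw [prodl_cons, map_mul, Module.End.mul_eq_comp, LinearMap.comp_apply,
        ih ht (fun i' hi' => hγ i' (List.mem_cons_of_mem _ hi')), map_pow,
        Phi_X, L_pow]
      have hfk : fk q i (γ + off t α) = 1 := by
        refine fk_eq_one q fun j hj => ?_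
        have h1 : γ j = 0 := hγ i List.mem_cons_self j hj
        have h2 : off t α j = 0 := off_apply_not_mem
          (fun hm => absurd (hit j hm) (by omega))
        simp [h1, h2]
      rw [hfk, one_pow, one_mul, off_cons]
      rw [Finsupp.smul_single, smul_eq_mul, mul_one]
      congr 1
      abel

/-- evaluation at the vacuum vector -/
noncomputable def evL (hqii : ∀ i, q i i = 1) (hqsym : ∀ i j, q i j * q j i = 1) :
    SkewPoly k n q →ₗ[k] ((Fin n → ℕ) →₀ k) where
  toFun r := Phi q hqii hqsym r (Finsupp.single 0 1)
  map_add' x y := by simp [map_add]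
  map_smul' c x := by simp [map_smul]

lemma evL_skewMono (hqii : ∀ i, q i i = 1) (hqsym : ∀ i j, q i j * q j i = 1)
    (α : Fin n → ℕ) :
    evL q hqii hqsym (skewMono q α) = Finsupp.single α 1 := by
  show Phi q hqii hqsym (skewMono q α) (Finsupp.single 0 1) = _
  rw [skewMono_eq_prodl, Phi_prodl q hqii hqsym (γ := 0)
    (List.pairwise_lt_finRange n) α (fun _ _ _ _ => rfl) 1, off_finRange, zero_add]

lemma linearIndependent_skewMono (hqii : ∀ i, q i i = 1)
    (hqsym : ∀ i j, q i j * q j i = 1) :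
    LinearIndependent k (fun α : Fin n → ℕ => skewMono (k := k) q α) := by
  apply LinearIndependent.of_comp (evL q hqii hqsym)
  have he : (⇑(evL q hqii hqsym) ∘ fun α : Fin n → ℕ => skewMono (k := k) q α)
      = ⇑(Finsupp.basisSingleOne : Module.Basis (Fin n → ℕ) k ((Fin n → ℕ) →₀ k)) := by
    funext α
    rw [Function.comp_apply, Finsupp.coe_basisSingleOne, evL_skewMono]
  rw [he]
  exact (Finsupp.basisSingleOne).linearIndependent

lemma mul_mem_span (u v : SkewPoly k n q)
    (hu : u ∈ Submodule.span k (Set.range (skewMono (k := k) q)))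
    (hv : v ∈ Submodule.span k (Set.range (skewMono (k := k) q))) :
    u * v ∈ Submodule.span k (Set.range (skewMono (k := k) q)) := by
  induction hu using Submodule.span_induction with
  | mem x hx =>
      induction hv using Submodule.span_induction with
      | mem y hy =>
          obtain ⟨α, rfl⟩ := hx
          obtain ⟨β, rfl⟩ := hy
          rw [skewMono_mul]
          exact Submodule.smul_mem _ _ (Submodule.subset_span ⟨α + β, rfl⟩)
      | zero => rw [mul_zero]; exact Submodule.zero_mem _
      | add y z _ _ hy hz => rw [mul_add]; exact Submodule.add_mem _ hy hz
      | smul c y _ hy => rw [mul_smul_comm]; exact Submodule.smul_mem _ _ hy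
  | zero => rw [zero_mul]; exact Submodule.zero_mem _
  | add x y _ _ hx hy => rw [add_mul]; exact Submodule.add_mem _ hx hy
  | smul c x _ hx => rw [smul_mul_assoc]; exact Submodule.smul_mem _ _ hx

lemma span_skewMono :
    ⊤ ≤ Submodule.span k (Set.range (skewMono (k := k) q)) := by
  intro r hr
  clear hr
  obtain ⟨x, rfl⟩ := RingQuot.mkAlgHom_surjective k (SkewRel k n q) r
  induction x using FreeAlgebra.induction with
  | grade0 c =>
      rw [AlgHom.commutes, Algebra.algebraMap_eq_smul_one, ← skewMono_zero q]
      exact Submodule.smul_mem _ _ (Submodule.subset_span ⟨0, rfl⟩)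
  | grade1 i =>
      show skewX q i ∈ _
      rw [← skewMono_singleExp]
      exact Submodule.subset_span ⟨Pi.single i 1, rfl⟩
  | mul x y hx hy =>
      rw [map_mul]
      exact mul_mem_span q _ _ hx hy
  | add x y hx hy =>
      rw [map_add]
      exact Submodule.add_mem _ hx hy

/-- the PBW basis of the skew polynomial ring -/
noncomputable def bR (hqii : ∀ i, q i i = 1) (hqsym : ∀ i j, q i j * q j i = 1) :
    Module.Basis (Fin n → ℕ) k (SkewPoly k n q) :=
  Module.Basis.mk (linearIndependent_skewMono q hqii hqsym) (span_skewMono q)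

lemma bR_apply (hqii : ∀ i, q i i = 1) (hqsym : ∀ i j, q i j * q j i = 1)
    (α : Fin n → ℕ) : bR q hqii hqsym α = skewMono q α :=
  Module.Basis.mk_apply _ _ _

end SkewAux
namespace SkewAux
open Finset

variable {k : Type*} [Field k] {n s : ℕ} (q : Fin n → Fin n → kˣ) (a : Fin s → Fin n → ℕ)

/-- the Taylor differential as a `k`-linear map -/
noncomputable def D :
    (Finset (Fin s) →₀ SkewPoly k n q) →ₗ[k] (Finset (Fin s) →₀ SkewPoly k n q) where
  toFun := taylorDiff q a
  map_add' v w := by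
    unfold taylorDiff
    apply Finsupp.sum_add_index'
    · intro F
      ext G
      simp [Finsupp.mapRange_apply]
    · intro F r1 r2
      ext G
      simp [Finsupp.mapRange_apply, mul_add]
  map_smul' c v := by
    show taylorDiff q a (c • v) = (RingHom.id k) c • taylorDiff q a v
    unfold taylorDiff
    rw [Finsupp.sum_smul_index' (fun F => by ext G; simp [Finsupp.mapRange_apply]),
      RingHom.id_apply, Finsupp.smul_sum]
    refine Finsupp.sum_congr fun F _ => ?_
    ext G
    simp [Finsupp.mapRange_apply, mul_smul_comm]

lemma D_apply (v : Finset (Fin s) →₀ SkewPoly k n q) :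
    D q a v = taylorDiff q a v := rfl

lemma taylorDiff_single (F : Finset (Fin s)) (r : SkewPoly k n q) :
    taylorDiff q a (Finsupp.single F r)
      = Finsupp.mapRange (· * r) (zero_mul r) (taylorBdry q a F) := by
  unfold taylorDiff
  apply Finsupp.sum_single_index
  ext G
  simp [Finsupp.mapRange_apply]

lemma lcm_erase_le (F : Finset (Fin s)) (i : Fin s) (t : Fin n) :
    lcmExp a (F.erase i) t ≤ lcmExp a F t :=
  Finset.sup_mono (F.erase_subset i)

lemma lcm_erase_add (F : Finset (Fin s)) (i : Fin s) :
    lcmExp a (F.erase i) + (lcmExp a F - lcmExp a (F.erase i)) = lcmExp a F := by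
  funext t
  exact Nat.add_sub_cancel' (lcm_erase_le a F i t)

/-- the inverse-bicharacter coefficient in the boundary -/
noncomputable def tco (F : Finset (Fin s)) (i : Fin s) : kˣ :=
  (CC q (lcmExp a (F.erase i)) (lcmExp a F - lcmExp a (F.erase i)))⁻¹

lemma bdry_eq (F : Finset (Fin s)) :
    taylorBdry q a F = ∑ i ∈ F, Finsupp.single (F.erase i)
      ((((-1 : k) ^ taylorSign F i * ((tco q a F i : kˣ) : k)))
        • skewMono q (lcmExp a F - lcmExp a (F.erase i))) := by
  unfold taylorBdry
  refine Finset.sum_congr rfl fun i hi => ?_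
  congr 1
  rw [skewC_cast_sub q _ _ _ (lcm_erase_le a F i), Algebra.smul_def, map_mul,
    map_pow, map_neg, map_one, tco, mul_assoc]

lemma D_single_mono (F : Finset (Fin s)) (γ : Fin n → ℕ) :
    taylorDiff q a (Finsupp.single F (skewMono q γ))
      = ∑ i ∈ F, (((-1 : k) ^ taylorSign F i)
            * ((tco q a F i * CC q (lcmExp a F - lcmExp a (F.erase i)) γ : kˣ) : k))
          • Finsupp.single (F.erase i)
              (skewMono q ((lcmExp a F - lcmExp a (F.erase i)) + γ)) := by
  rw [taylorDiff_single, bdry_eq]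
  have hmr : Finsupp.mapRange (· * skewMono q γ) (zero_mul _)
      (∑ i ∈ F, Finsupp.single (F.erase i)
        ((((-1 : k) ^ taylorSign F i * ((tco q a F i : kˣ) : k)))
          • skewMono q (lcmExp a F - lcmExp a (F.erase i))))
      = ∑ i ∈ F, Finsupp.mapRange (· * skewMono q γ) (zero_mul _)
          (Finsupp.single (F.erase i)
            ((((-1 : k) ^ taylorSign F i * ((tco q a F i : kˣ) : k)))
              • skewMono q (lcmExp a F - lcmExp a (F.erase i)))) :=
    map_sum (Finsupp.mapRange.addMonoidHom (AddMonoidHom.mulRight (skewMono q γ))) _ F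
  rw [hmr]
  refine Finset.sum_congr rfl fun i hi => ?_
  rw [Finsupp.mapRange_single, smul_mul_assoc, skewMono_mul, smul_smul,
    Finsupp.smul_single]
  congr 2
  rw [Units.val_mul, mul_assoc]

end SkewAux
namespace SkewAux
open Finset

variable {k : Type*} [Field k] {n s : ℕ} (q : Fin n → Fin n → kˣ) (a : Fin s → Fin n → ℕ)

lemma u_cancel2 (u v w : kˣ) :
    ((u * v⁻¹ : kˣ) : k) * ((v * w⁻¹ : kˣ) : k) = ((u * w⁻¹ : kˣ) : k) := by
  rw [← Units.val_mul]
  congr 1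
  rw [mul_assoc, ← mul_assoc v⁻¹, inv_mul_cancel, one_mul]

lemma u_cancel1 (u v : kˣ) :
    ((u * v⁻¹ : kˣ) : k) * ((v * u⁻¹ : kˣ) : k) = 1 := by
  rw [u_cancel2, mul_inv_cancel, Units.val_one]

/-- the vertex set of the degree-`δ` strand -/
def Vset (δ : Fin n → ℕ) : Finset (Fin s) :=
  Finset.univ.filter fun l => ∀ t, a l t ≤ δ t

lemma mem_Vset {l : Fin s} {δ : Fin n → ℕ} : l ∈ Vset a δ ↔ ∀ t, a l t ≤ δ t := by
  simp [Vset]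

lemma subset_Vset {F : Finset (Fin s)} {δ : Fin n → ℕ}
    (h : ∀ t, lcmExp a F t ≤ δ t) : F ⊆ Vset a δ := fun l hl =>
  mem_Vset a |>.mpr fun t => le_trans (Finset.le_sup (f := fun l => a l t) hl) (h t)

lemma lcm_le_of_subset_Vset {F : Finset (Fin s)} {δ : Fin n → ℕ}
    (h : F ⊆ Vset a δ) (t : Fin n) : lcmExp a F t ≤ δ t :=
  Finset.sup_le fun l hl => (mem_Vset a |>.mp (h hl)) t

lemma lcm_add_sub {G : Finset (Fin s)} {δ : Fin n → ℕ}
    (h : ∀ t, lcmExp a G t ≤ δ t) : lcmExp a G + (δ - lcmExp a G) = δ :=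
  funext fun t => Nat.add_sub_cancel' (h t)

/-- normalizing unit -/
def wco (G : Finset (Fin s)) (δ : Fin n → ℕ) : kˣ :=
  CC q (lcmExp a G) (δ - lcmExp a G)

/-- degree-δ basis vector attached to `G` -/
noncomputable def gg (δ : Fin n → ℕ) (G : Finset (Fin s)) :
    Finset (Fin s) →₀ SkewPoly k n q :=
  Finsupp.single G (skewMono q (δ - lcmExp a G))

lemma D_gg {δ : Fin n → ℕ} {G : Finset (Fin s)} (h : ∀ t, lcmExp a G t ≤ δ t) :
    taylorDiff q a (gg q a δ G)
      = ∑ i ∈ G, (((-1 : k) ^ taylorSign G i)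
            * ((wco q a G δ * (wco q a (G.erase i) δ)⁻¹ : kˣ) : k))
          • gg q a δ (G.erase i) := by
  rw [gg, D_single_mono]
  refine Finset.sum_congr rfl fun i hi => ?_
  have hv : (lcmExp a G - lcmExp a (G.erase i)) + (δ - lcmExp a G)
      = δ - lcmExp a (G.erase i) := by
    funext t
    have h1 := lcm_erase_le a G i t
    have h2 := h t
    simp only [Pi.add_apply, Pi.sub_apply]
    omega
  have hu : tco q a G i * CC q (lcmExp a G - lcmExp a (G.erase i)) (δ - lcmExp a G)
      = wco q a G δ * (wco q a (G.erase i) δ)⁻¹ := by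
    have e1 : wco q a G δ = CC q (lcmExp a (G.erase i)) (δ - lcmExp a G)
        * CC q (lcmExp a G - lcmExp a (G.erase i)) (δ - lcmExp a G) := by
      rw [wco, ← CC_add_left, lcm_erase_add]
    have e2 : wco q a (G.erase i) δ
        = CC q (lcmExp a (G.erase i)) (lcmExp a G - lcmExp a (G.erase i))
          * CC q (lcmExp a (G.erase i)) (δ - lcmExp a G) := by
      rw [wco, ← CC_add_right]
      congr 1
      funext t
      have h1 := lcm_erase_le a G i t
      have h2 := h t
      simp only [Pi.add_apply, Pi.sub_apply]
      omega
    rw [tco, e1, e2]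
    refine Units.ext ?_
    simp only [Units.val_mul, Units.val_inv_eq_inv_val]
    field_simp
  rw [hv, hu, gg]

/-- the contracting homotopy on basis indices -/
noncomputable def hfun : ((_ : Finset (Fin s)) × (Fin n → ℕ)) →
    Finset (Fin s) →₀ SkewPoly k n q :=
  fun Fγ =>
    if hne : (Vset a (lcmExp a Fγ.1 + Fγ.2)).Nonempty then
      if (Vset a (lcmExp a Fγ.1 + Fγ.2)).min' hne ∈ Fγ.1 then 0
      else ((wco q a Fγ.1 (lcmExp a Fγ.1 + Fγ.2)
          * (wco q a (insert ((Vset a (lcmExp a Fγ.1 + Fγ.2)).min' hne) Fγ.1)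
              (lcmExp a Fγ.1 + Fγ.2))⁻¹ : kˣ) : k)
        • gg q a (lcmExp a Fγ.1 + Fγ.2)
            (insert ((Vset a (lcmExp a Fγ.1 + Fγ.2)).min' hne) Fγ.1)
    else 0

/-- basis of the total Taylor module -/
noncomputable def bT (hqii : ∀ i, q i i = 1) (hqsym : ∀ i j, q i j * q j i = 1) :
    Module.Basis ((_ : Finset (Fin s)) × (Fin n → ℕ)) k (Finset (Fin s) →₀ SkewPoly k n q) :=
  Finsupp.basis fun _ => bR q hqii hqsym

lemma bT_apply (hqii : ∀ i, q i i = 1) (hqsym : ∀ i j, q i j * q j i = 1)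
    (F : Finset (Fin s)) (γ : Fin n → ℕ) :
    bT q hqii hqsym ⟨F, γ⟩ = Finsupp.single F (skewMono q γ) := by
  have h := congrFun (Finsupp.coe_basis (fun _ : Finset (Fin s) => bR q hqii hqsym))
    (⟨F, γ⟩ : (_ : Finset (Fin s)) × (Fin n → ℕ))
  unfold bT
  rw [h, bR_apply]

/-- the contracting homotopy -/
noncomputable def HH (hqii : ∀ i, q i i = 1) (hqsym : ∀ i j, q i j * q j i = 1) :
    (Finset (Fin s) →₀ SkewPoly k n q) →ₗ[k] (Finset (Fin s) →₀ SkewPoly k n q) :=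
  (bT q hqii hqsym).constr k (hfun q a)

lemma HH_single (hqii : ∀ i, q i i = 1) (hqsym : ∀ i j, q i j * q j i = 1)
    (F : Finset (Fin s)) (γ : Fin n → ℕ) :
    HH q a hqii hqsym (Finsupp.single F (skewMono q γ)) = hfun q a ⟨F, γ⟩ := by
  rw [← bT_apply q hqii hqsym F γ, HH]
  exact Module.Basis.constr_basis _ _ _ _

lemma H_gg_mem (hqii : ∀ i, q i i = 1) (hqsym : ∀ i j, q i j * q j i = 1)
    {δ : Fin n → ℕ} {G : Finset (Fin s)} (h : ∀ t, lcmExp a G t ≤ δ t)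
    (hne : (Vset a δ).Nonempty) (hm : (Vset a δ).min' hne ∈ G) :
    HH q a hqii hqsym (gg q a δ G) = 0 := by
  rw [gg, HH_single]
  unfold hfun
  simp only [lcm_add_sub a h]
  rw [dif_pos hne, if_pos hm]

lemma H_gg_not (hqii : ∀ i, q i i = 1) (hqsym : ∀ i j, q i j * q j i = 1)
    {δ : Fin n → ℕ} {G : Finset (Fin s)} (h : ∀ t, lcmExp a G t ≤ δ t)
    (hne : (Vset a δ).Nonempty) (hm : (Vset a δ).min' hne ∉ G) :
    HH q a hqii hqsym (gg q a δ G)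
      = ((wco q a G δ * (wco q a (insert ((Vset a δ).min' hne) G) δ)⁻¹ : kˣ) : k)
          • gg q a δ (insert ((Vset a δ).min' hne) G) := by
  rw [gg, HH_single]
  unfold hfun
  simp only [lcm_add_sub a h]
  rw [dif_pos hne, if_neg hm]

lemma taylorSign_eq_zero {F : Finset (Fin s)} {i : Fin s}
    (h : ∀ j ∈ F, ¬ j < i) : taylorSign F i = 0 := by
  unfold taylorSign
  rw [Finset.filter_false_of_mem h, Finset.card_empty]

lemma taylorSign_insert {F : Finset (Fin s)} {m i : Fin s}
    (hm : m ∉ F) (hmi : m < i) :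
    taylorSign (insert m F) i = taylorSign F i + 1 := by
  unfold taylorSign
  rw [Finset.filter_insert, if_pos hmi,
    Finset.card_insert_of_notMem fun hc => hm (Finset.mem_of_mem_filter m hc)]

end SkewAux

namespace SkewAux
open Finset

variable {k : Type*} [Field k] {n s : ℕ} (q : Fin n → Fin n → kˣ) (a : Fin s → Fin n → ℕ)

lemma taylorDiff_zero : taylorDiff q a (0 : Finset (Fin s) →₀ SkewPoly k n q) = 0 :=
  Finsupp.sum_zero_index

lemma key' (hqii : ∀ i, q i i = 1) (hqsym : ∀ i j, q i j * q j i = 1)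
    {δ : Fin n → ℕ} {F : Finset (Fin s)} (hFV : F ⊆ Vset a δ) (hF : F.Nonempty) :
    taylorDiff q a (HH q a hqii hqsym (gg q a δ F))
      + HH q a hqii hqsym (taylorDiff q a (gg q a δ F)) = gg q a δ F := by
  have hne : (Vset a δ).Nonempty := hF.mono hFV
  set m := (Vset a δ).min' hne with hm_def
  have hmV : m ∈ Vset a δ := Finset.min'_mem _ _
  have hleF : ∀ t, lcmExp a F t ≤ δ t := lcm_le_of_subset_Vset a hFV
  have hleE : ∀ (i : Fin s) (t : Fin n), lcmExp a (F.erase i) t ≤ δ t :=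
    fun i t => le_trans (lcm_erase_le a F i t) (hleF t)
  have hmleF : ∀ j ∈ F, m ≤ j := fun j hj => Finset.min'_le _ j (hFV hj)
  by_cases hm : m ∈ F
  · rw [H_gg_mem q a hqii hqsym hleF hne hm, taylorDiff_zero, zero_add,
      D_gg q a hleF, map_sum]
    have hz : ∀ i ∈ F, i ≠ m →
        HH q a hqii hqsym ((((-1 : k) ^ taylorSign F i)
          * ((wco q a F δ * (wco q a (F.erase i) δ)⁻¹ : kˣ) : k))
            • gg q a δ (F.erase i)) = 0 := by
      intro i hiF hne_i
      rw [map_smul, H_gg_mem q a hqii hqsym (hleE i) hne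
        (Finset.mem_erase.mpr ⟨Ne.symm hne_i, hm⟩), smul_zero]
    rw [Finset.sum_eq_single_of_mem m hm hz, map_smul,
      H_gg_not q a hqii hqsym (hleE m) hne (Finset.notMem_erase m F),
      Finset.insert_erase hm]
    have hsgn : taylorSign F m = 0 :=
      taylorSign_eq_zero fun j hj hlt => absurd (hmleF j hj) (not_le.mpr hlt)
    rw [hsgn, pow_zero, one_mul, smul_smul, u_cancel1, one_smul]
  · have hmd : ∀ t, a m t ≤ δ t := (mem_Vset a).mp hmV
    have hleF' : ∀ t, lcmExp a (insert m F) t ≤ δ t := by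
      intro t
      show (insert m F).sup (fun l => a l t) ≤ δ t
      rw [Finset.sup_insert]
      exact sup_le (hmd t) (hleF t)
    have hDh : taylorDiff q a (HH q a hqii hqsym (gg q a δ F))
        = gg q a δ F + ∑ i ∈ F,
            (((-1 : k) ^ (taylorSign F i + 1))
              * ((wco q a F δ * (wco q a ((insert m F).erase i) δ)⁻¹ : kˣ) : k))
            • gg q a δ ((insert m F).erase i) := by
      rw [H_gg_not q a hqii hqsym hleF hne hm, ← D_apply, map_smul, D_apply,
        D_gg q a hleF', Finset.smul_sum, Finset.sum_insert hm]
      congr 1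
      · rw [Finset.erase_insert hm]
        have hsgn : taylorSign (insert m F) m = 0 := by
          refine taylorSign_eq_zero fun j hj hlt => ?_
          rcases Finset.mem_insert.mp hj with rfl | hjF
          · exact absurd hlt (lt_irrefl _)
          · exact absurd (hmleF j hjF) (not_le.mpr hlt)
        rw [hsgn, pow_zero, one_mul, smul_smul, u_cancel1, one_smul]
      · refine Finset.sum_congr rfl fun i hi => ?_
        rw [smul_smul]
        congr 1
        have hmi : m < i := lt_of_le_of_ne (hmleF i hi) (fun e => hm (e ▸ hi))
        rw [taylorSign_insert hm hmi, mul_left_comm, u_cancel2]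
    have hHd : HH q a hqii hqsym (taylorDiff q a (gg q a δ F))
        = ∑ i ∈ F, (((-1 : k) ^ taylorSign F i)
            * ((wco q a F δ * (wco q a ((insert m F).erase i) δ)⁻¹ : kˣ) : k))
            • gg q a δ ((insert m F).erase i) := by
      rw [D_gg q a hleF, map_sum]
      refine Finset.sum_congr rfl fun i hi => ?_
      rw [map_smul]
      have hmi : m ∉ F.erase i := fun hc => hm (Finset.mem_of_mem_erase hc)
      have hins : insert m (F.erase i) = (insert m F).erase i :=
        (Finset.erase_insert_of_ne (fun e : m = i => hm (e ▸ hi))).symm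
      rw [H_gg_not q a hqii hqsym (hleE i) hne hmi, hins, smul_smul]
      congr 1
      rw [mul_assoc, u_cancel2]
    rw [hDh, hHd, add_assoc, ← Finset.sum_add_distrib]
    have hcanc : ∀ i ∈ F,
        ((((-1 : k) ^ (taylorSign F i + 1))
            * ((wco q a F δ * (wco q a ((insert m F).erase i) δ)⁻¹ : kˣ) : k))
          • gg q a δ ((insert m F).erase i))
        + ((((-1 : k) ^ taylorSign F i)
            * ((wco q a F δ * (wco q a ((insert m F).erase i) δ)⁻¹ : kˣ) : k))
          • gg q a δ ((insert m F).erase i)) = 0 := by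
      intro i hi
      rw [← add_smul]
      have hc : ((-1 : k) ^ (taylorSign F i + 1))
            * ((wco q a F δ * (wco q a ((insert m F).erase i) δ)⁻¹ : kˣ) : k)
          + ((-1 : k) ^ taylorSign F i)
            * ((wco q a F δ * (wco q a ((insert m F).erase i) δ)⁻¹ : kˣ) : k) = 0 := by
        rw [pow_succ]
        ring
      rw [hc, zero_smul]
    rw [Finset.sum_congr rfl hcanc, Finset.sum_const_zero, add_zero]

lemma key (hqii : ∀ i, q i i = 1) (hqsym : ∀ i j, q i j * q j i = 1)
    {F : Finset (Fin s)} (hF : F.Nonempty) (γ : Fin n → ℕ) :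
    taylorDiff q a (HH q a hqii hqsym (Finsupp.single F (skewMono q γ)))
      + HH q a hqii hqsym (taylorDiff q a (Finsupp.single F (skewMono q γ)))
      = Finsupp.single F (skewMono q γ) := by
  have hgg : Finsupp.single F (skewMono q γ) = gg q a (lcmExp a F + γ) F := by
    rw [gg]
    congr 1
    congr 1
    funext t
    simp only [Pi.add_apply, Pi.sub_apply]
    omega
  rw [hgg]
  exact key' q a hqii hqsym
    (subset_Vset a fun t => Nat.le_add_right _ _) hF

end SkewAux


namespace SkewAux
open Finset

variable {k : Type*} [Field k] {n s : ℕ} (q : Fin n → Fin n → kˣ) (a : Fin s → Fin n → ℕ)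

/-- submodule of vectors supported in cardinality `c` -/
def Wc (c : ℕ) : Submodule k (Finset (Fin s) →₀ SkewPoly k n q) where
  carrier := {w | ∀ G ∈ w.support, G.card = c}
  zero_mem' := by intro G hG; simp at hG
  add_mem' := by
    intro x y hx hy G hG
    rcases Finset.mem_union.mp (Finsupp.support_add hG) with h | h
    · exact hx G h
    · exact hy G h
  smul_mem' := by
    intro c' x hx G hG
    exact hx G (Finsupp.support_smul hG)

def genSet (p : ℕ) : Set (Finset (Fin s) →₀ SkewPoly k n q) :=
  {x | ∃ F γ, F.card = p ∧ x = Finsupp.single F (skewMono q γ)}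

lemma single_mem_span (p : ℕ) (F : Finset (Fin s)) (hF : F.card = p)
    (r : SkewPoly k n q) :
    Finsupp.single F r ∈ Submodule.span k (genSet q p) := by
  have hr : r ∈ Submodule.span k (Set.range (skewMono (k := k) q)) :=
    span_skewMono q Submodule.mem_top
  induction hr using Submodule.span_induction with
  | mem x hx =>
      obtain ⟨γ, rfl⟩ := hx
      exact Submodule.subset_span ⟨F, γ, hF, rfl⟩
  | zero => rw [Finsupp.single_zero]; exact Submodule.zero_mem _
  | add x y _ _ hx hy => rw [Finsupp.single_add]; exact Submodule.add_mem _ hx hy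
  | smul c x _ hx => rw [← Finsupp.smul_single]; exact Submodule.smul_mem _ _ hx

lemma mem_span_gen {p : ℕ} (v : Finset (Fin s) →₀ SkewPoly k n q)
    (hv : ∀ F ∈ v.support, F.card = p) :
    v ∈ Submodule.span k (genSet q p) := by
  rw [← Finsupp.sum_single v]
  refine Submodule.finsuppSum_mem k _ v Finsupp.single fun F hF => ?_
  exact single_mem_span q p F (hv F (Finsupp.mem_support_iff.mpr hF)) (v F)

/-- the homotopy operator `D∘H + H∘D` -/
noncomputable def PP (hqii : ∀ i, q i i = 1) (hqsym : ∀ i j, q i j * q j i = 1) :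
    (Finset (Fin s) →₀ SkewPoly k n q) →ₗ[k] (Finset (Fin s) →₀ SkewPoly k n q) :=
  (D q a) ∘ₗ (HH q a hqii hqsym) + (HH q a hqii hqsym) ∘ₗ (D q a)

lemma PP_apply (hqii : ∀ i, q i i = 1) (hqsym : ∀ i j, q i j * q j i = 1)
    (v : Finset (Fin s) →₀ SkewPoly k n q) :
    PP q a hqii hqsym v
      = taylorDiff q a (HH q a hqii hqsym v) + HH q a hqii hqsym (taylorDiff q a v) :=
  rfl

lemma homotopy_on (hqii : ∀ i, q i i = 1) (hqsym : ∀ i j, q i j * q j i = 1)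
    {p : ℕ} (hp : 1 ≤ p) {v : Finset (Fin s) →₀ SkewPoly k n q}
    (hv : v ∈ Submodule.span k (genSet q p)) :
    PP q a hqii hqsym v = v := by
  induction hv using Submodule.span_induction with
  | mem x hx =>
      obtain ⟨F, γ, hF, rfl⟩ := hx
      have hFne : F.Nonempty := Finset.card_pos.mp (by omega)
      rw [PP_apply]
      exact key q a hqii hqsym hFne γ
  | zero => rw [map_zero]
  | add x y _ _ hx hy => rw [map_add, hx, hy]
  | smul c x _ hx => rw [map_smul, hx]

lemma H_support (hqii : ∀ i, q i i = 1) (hqsym : ∀ i j, q i j * q j i = 1)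
    {p : ℕ} {v : Finset (Fin s) →₀ SkewPoly k n q}
    (hv : v ∈ Submodule.span k (genSet q p)) :
    HH q a hqii hqsym v ∈ Wc q (p + 1) := by
  have hle : Submodule.span k (genSet q p)
      ≤ Submodule.comap (HH q a hqii hqsym) (Wc q (p + 1)) := by
    rw [Submodule.span_le]
    rintro x ⟨F, γ, hF, rfl⟩
    simp only [Set.mem_setOf_eq, SetLike.mem_coe, Submodule.mem_comap]
    rw [HH_single]
    unfold hfun
    split
    next hne =>
      split
      next => exact Submodule.zero_mem _
      next hmin =>
        intro G hG
        have h1 := Finsupp.support_smul hG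
        rw [gg] at h1
        have h2 := Finsupp.support_single_subset h1
        rw [Finset.mem_singleton] at h2
        subst h2
        rw [Finset.card_insert_of_notMem hmin, hF]
    next => exact Submodule.zero_mem _
  exact hle hv

theorem part1 (hqii : ∀ i, q i i = 1) (hqsym : ∀ i j, q i j * q j i = 1)
    (p : ℕ) (hp : 1 ≤ p) (v : Finset (Fin s) →₀ SkewPoly k n q)
    (hv : ∀ F ∈ v.support, F.card = p) (hdv : taylorDiff q a v = 0) :
    ∃ w : Finset (Fin s) →₀ SkewPoly k n q,
      (∀ F ∈ w.support, F.card = p + 1) ∧ taylorDiff q a w = v := by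
  have hsp := mem_span_gen q v hv
  refine ⟨HH q a hqii hqsym v, fun F hF => H_support q a hqii hqsym hsp F hF, ?_⟩
  have hk := homotopy_on q a hqii hqsym hp hsp
  rw [PP_apply, hdv, map_zero, add_zero] at hk
  exact hk

end SkewAux


namespace SkewAux
open Finset

variable {k : Type*} [Field k] {n s : ℕ} (q : Fin n → Fin n → kˣ) (a : Fin s → Fin n → ℕ)

lemma bdry_singleton (l : Fin s) :
    taylorBdry q a {l} = Finsupp.single ∅ (skewMono q (a l)) := by
  rw [bdry_eq, Finset.sum_singleton]
  have h1 : taylorSign ({l} : Finset (Fin s)) l = 0 :=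
    taylorSign_eq_zero (by simp)
  have h2 : lcmExp a (∅ : Finset (Fin s)) = 0 := by
    funext t; simp [lcmExp]
  have h3 : lcmExp a ({l} : Finset (Fin s)) = a l := by
    funext t; simp [lcmExp]
  unfold tco
  rw [Finset.erase_singleton, h1, pow_zero, one_mul, h2, h3]
  have h4 : a l - (0 : Fin n → ℕ) = a l := by funext t; simp
  rw [h4, CC_zero_left, inv_one, Units.val_one, one_smul]

lemma D_single_l (l : Fin s) (r : SkewPoly k n q) :
    taylorDiff q a (Finsupp.single {l} r) = Finsupp.single ∅ (skewMono q (a l) * r) := by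
  rw [taylorDiff_single, bdry_singleton, Finsupp.mapRange_single]

lemma commute_mono (c : Fin n → ℕ) (t : SkewPoly k n q) :
    ∃ t', t * skewMono q c = skewMono q c * t' := by
  have ht : t ∈ Submodule.span k (Set.range (skewMono (k := k) q)) :=
    span_skewMono q Submodule.mem_top
  induction ht using Submodule.span_induction with
  | mem x hx =>
      obtain ⟨α, rfl⟩ := hx
      refine ⟨((CC q α c * (CC q c α)⁻¹ : kˣ) : k) • skewMono q α, ?_⟩
      rw [skewMono_mul, mul_smul_comm, skewMono_mul, smul_smul,
        ← Units.val_mul, inv_mul_cancel_right, add_comm α c]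
  | zero => exact ⟨0, by rw [zero_mul, mul_zero]⟩
  | add x y _ _ hx hy =>
      obtain ⟨tx, htx⟩ := hx
      obtain ⟨ty, hty⟩ := hy
      exact ⟨tx + ty, by rw [add_mul, htx, hty, mul_add]⟩
  | smul c' x _ hx =>
      obtain ⟨tx, htx⟩ := hx
      exact ⟨c' • tx, by rw [smul_mul_assoc, htx, mul_smul_comm]⟩

def Jset : Set (SkewPoly k n q) :=
  {r | ∃ f : Fin s → SkewPoly k n q, r = ∑ l, skewMono q (a l) * f l}

noncomputable def J : TwoSidedIdeal (SkewPoly k n q) :=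
  TwoSidedIdeal.mk' (Jset q a)
    ⟨0, by simp⟩
    (by rintro x y ⟨f, rfl⟩ ⟨g, rfl⟩
        exact ⟨f + g, by
          rw [← Finset.sum_add_distrib]
          exact Finset.sum_congr rfl fun l _ => (mul_add _ _ _).symm⟩)
    (by rintro x ⟨f, rfl⟩
        exact ⟨-f, by
          rw [← Finset.sum_neg_distrib]
          refine Finset.sum_congr rfl fun l _ => ?_
          show -(skewMono q (a l) * f l) = skewMono q (a l) * -(f l)
          exact (mul_neg (skewMono q (a l)) (f l)).symm⟩)
    (by rintro x y ⟨f, rfl⟩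
        refine ⟨fun l => (commute_mono q (a l) x).choose * f l, ?_⟩
        rw [Finset.mul_sum]
        refine Finset.sum_congr rfl fun l _ => ?_
        rw [← mul_assoc, (commute_mono q (a l) x).choose_spec, mul_assoc])
    (by rintro x y ⟨f, rfl⟩
        refine ⟨fun l => f l * y, ?_⟩
        rw [Finset.sum_mul]
        exact Finset.sum_congr rfl fun l _ => (mul_assoc _ _ _))

lemma mem_J {x : SkewPoly k n q} :
    x ∈ J q a ↔ ∃ f : Fin s → SkewPoly k n q, x = ∑ l, skewMono q (a l) * f l :=
  TwoSidedIdeal.mem_mk' _ _ _ _ _ _ _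

theorem part2 (r : SkewPoly k n q) :
    (∃ v : Finset (Fin s) →₀ SkewPoly k n q,
        (∀ F ∈ v.support, F.card = 1) ∧ taylorDiff q a v = Finsupp.single ∅ r) ↔
      r ∈ TwoSidedIdeal.span (Set.range fun i => skewMono q (a i)) := by
  constructor
  · rintro ⟨v, hc, hv⟩
    have hr : r = taylorDiff q a v ∅ := by rw [hv, Finsupp.single_eq_same]
    rw [hr]
    have hdv : taylorDiff q a v
        = ∑ F ∈ v.support, taylorDiff q a (Finsupp.single F (v F)) := by
      conv_lhs => rw [← Finsupp.sum_single v]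
      rw [← D_apply, Finsupp.sum, map_sum]
      simp only [D_apply]
    rw [hdv, Finsupp.finset_sum_apply]
    refine sum_mem fun F hF => ?_
    obtain ⟨l, rfl⟩ := Finset.card_eq_one.mp (hc F hF)
    rw [D_single_l, Finsupp.single_eq_same]
    exact TwoSidedIdeal.mul_mem_right _ _ _ (TwoSidedIdeal.subset_span ⟨l, rfl⟩)
  · intro hr
    have hsub : (Set.range fun i => skewMono q (a i)) ⊆ (J q a : Set _) := by
      rintro x ⟨i, rfl⟩
      refine SetLike.mem_coe.mpr ((mem_J q a).mpr ⟨fun l => if l = i then 1 else 0, ?_⟩)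
      have hterm : ∀ l : Fin s,
          skewMono q (a l) * (if l = i then (1 : SkewPoly k n q) else 0)
            = if l = i then skewMono q (a l) else 0 := fun l => by
        split <;> simp
      rw [Finset.sum_congr rfl fun l _ => hterm l, Finset.sum_ite_eq' Finset.univ i,
        if_pos (Finset.mem_univ i)]
    have hJ : r ∈ J q a := TwoSidedIdeal.mem_span_iff.mp hr (J q a) hsub
    obtain ⟨f, rfl⟩ := (mem_J q a).mp hJ
    refine ⟨∑ l : Fin s, Finsupp.single {l} (f l), ?_, ?_⟩
    · intro F hF
      obtain ⟨l, _, hFl⟩ := Finset.mem_biUnion.mp (Finsupp.support_finset_sum hF)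
      have hFeq := Finsupp.support_single_subset hFl
      rw [Finset.mem_singleton] at hFeq
      rw [hFeq, Finset.card_singleton]
    · rw [← D_apply, map_sum]
      simp only [D_apply, D_single_l]
      simp only [← Finsupp.singleAddHom_apply]
      rw [← map_sum]

end SkewAux

/-- over a field `k`, the augmented skew Taylor complex
`0 → T_s → ⋯ → T_1 → R → R/I → 0` is exact, where `I` is the two-sided ideal of `R`
generated by the monomials `x^{a_1}, …, x^{a_s}`.  Exactness in homological degrees
`p ≥ 1` says every degree-`p` cycle is a boundary from degree `p + 1`, and exactness
at `R` (i.e. `coker ∂_1 = R/I`) says the image of `∂_1` in `T_0 = R·e_∅` is exactly `I`. -/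
theorem taylor_is_free_resolution {k : Type*} [Field k] {n s : ℕ} (hn : 0 < n)
    (hs : 1 ≤ s) (q : Fin n → Fin n → kˣ)
    (hqii : ∀ i, q i i = 1) (hqsym : ∀ i j, q i j * q j i = 1)
    (a : Fin s → Fin n → ℕ) :
    (∀ p : ℕ, 1 ≤ p → ∀ v : Finset (Fin s) →₀ SkewPoly k n q,
      (∀ F ∈ v.support, F.card = p) → taylorDiff q a v = 0 →
        ∃ w : Finset (Fin s) →₀ SkewPoly k n q,
          (∀ F ∈ w.support, F.card = p + 1) ∧ taylorDiff q a w = v) ∧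
    (∀ r : SkewPoly k n q,
      (∃ v : Finset (Fin s) →₀ SkewPoly k n q,
          (∀ F ∈ v.support, F.card = 1) ∧ taylorDiff q a v = Finsupp.single ∅ r) ↔
        r ∈ TwoSidedIdeal.span (Set.range fun i => skewMono q (a i))) := by
  constructor
  · intro p hp v hv hdv
    exact SkewAux.part1 q a hqii hqsym p hp v hv hdv
  · intro r
    exact SkewAux.part2 q a r
end

section
/- Let u, u', w ∈ ℕ^n with u' ≤ u, and set P := u ⊔ w and P' := u' ⊔ w. Then C(P − P', (u + w) − P) · C(P', P − P')⁻¹ · C(u, w) · C(P, (u + w) − P)⁻¹ = C((u' + w) − P', u − u') · C(P', (u' + w) − P')⁻¹ · C(u − u', w) · C(w, u − u')⁻¹ · C(u', w) · C(u', u − u')⁻¹, and both sides equal C(P', (u + w) − P')⁻¹ · C(u, w). -/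
/-- Auxiliary: product of `q i j ^ f i j` over pairs `j < i`. -/
def skewD {k : Type*} [CommRing k] {n : ℕ} (q : Fin n → Fin n → kˣ)
    (f : Fin n → Fin n → ℤ) : kˣ :=
  ∏ i : Fin n, ∏ j ∈ Finset.univ.filter (fun j => j < i), q i j ^ (f i j)

lemma skewC_eq_skewD {k : Type*} [CommRing k] {n : ℕ} (q : Fin n → Fin n → kˣ)
    (α β : Fin n → ℤ) : skewC q α β = skewD q (fun i j => α i * β j) := rfl

lemma skewD_mul {k : Type*} [CommRing k] {n : ℕ} (q : Fin n → Fin n → kˣ)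
    (f g : Fin n → Fin n → ℤ) :
    skewD q f * skewD q g = skewD q (fun i j => f i j + g i j) := by
  simp [skewD, ← Finset.prod_mul_distrib, ← zpow_add]

lemma skewD_inv {k : Type*} [CommRing k] {n : ℕ} (q : Fin n → Fin n → kˣ)
    (f : Fin n → Fin n → ℤ) :
    (skewD q f)⁻¹ = skewD q (fun i j => -f i j) := by
  simp [skewD, ← Finset.prod_inv_distrib, ← zpow_neg]

lemma skewD_congr {k : Type*} [CommRing k] {n : ℕ} (q : Fin n → Fin n → kˣ)
    (f g : Fin n → Fin n → ℤ) (h : ∀ i j, f i j = g i j) :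
    skewD q f = skewD q g := by
  simp only [skewD]
  congr 1; funext i; exact Finset.prod_congr rfl fun j _ => by rw [h]

/-- the scalar identity for the Leibniz rule on the skew Taylor
resolution, in the case `i ∈ V`.  Here `u = a_V`, `u' = a_{V∖{i}}`, `w = a_W`,
`P = u ⊔ w`, `P' = u' ⊔ w`. -/
theorem skewC_leibniz_left {k : Type*} [CommRing k] {n : ℕ} (hn : 0 < n)
    (q : Fin n → Fin n → kˣ)
    (hqii : ∀ i, q i i = 1) (hqsym : ∀ i j, q i j * q j i = 1)
    (u u' w : Fin n → ℕ) (hu : u' ≤ u) :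
    skewC q (expZ (u ⊔ w) - expZ (u' ⊔ w)) (expZ u + expZ w - expZ (u ⊔ w)) *
          (skewC q (expZ (u' ⊔ w)) (expZ (u ⊔ w) - expZ (u' ⊔ w)))⁻¹ *
          skewC q (expZ u) (expZ w) *
          (skewC q (expZ (u ⊔ w)) (expZ u + expZ w - expZ (u ⊔ w)))⁻¹ =
        skewC q (expZ u' + expZ w - expZ (u' ⊔ w)) (expZ u - expZ u') *
          (skewC q (expZ (u' ⊔ w)) (expZ u' + expZ w - expZ (u' ⊔ w)))⁻¹ *
          skewC q (expZ u - expZ u') (expZ w) *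
          (skewC q (expZ w) (expZ u - expZ u'))⁻¹ *
          skewC q (expZ u') (expZ w) *
          (skewC q (expZ u') (expZ u - expZ u'))⁻¹ ∧
      skewC q (expZ (u ⊔ w) - expZ (u' ⊔ w)) (expZ u + expZ w - expZ (u ⊔ w)) *
          (skewC q (expZ (u' ⊔ w)) (expZ (u ⊔ w) - expZ (u' ⊔ w)))⁻¹ *
          skewC q (expZ u) (expZ w) *
          (skewC q (expZ (u ⊔ w)) (expZ u + expZ w - expZ (u ⊔ w)))⁻¹ =
        (skewC q (expZ (u' ⊔ w)) (expZ u + expZ w - expZ (u' ⊔ w)))⁻¹ *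
          skewC q (expZ u) (expZ w) := by
  constructor <;>
  · simp only [skewC_eq_skewD, skewD_inv, skewD_mul]
    apply skewD_congr
    intro i j
    simp only [Pi.add_apply, Pi.sub_apply]
    ring
end

section
/- Let u, v, w ∈ ℕ^n and write L := u ⊔ v ⊔ w. Then C(u ⊔ v, w)·χ((u + v) − (u ⊔ v), w)·C(u, v)·C(L, ((u ⊔ v) + w) − L)⁻¹·C(((u ⊔ v) + w) − L, (u + v) − (u ⊔ v))·C(u ⊔ v, (u + v) − (u ⊔ v))⁻¹ = C(v, w)·C(u, v ⊔ w)·C(L, (u + (v ⊔ w)) − L)⁻¹·C((u + (v ⊔ w)) − L, (v + w) − (v ⊔ w))·C(v ⊔ w, (v + w) − (v ⊔ w))⁻¹, and both sides equal C(u + v, w)·C(u, v)·C(L, (u + v + w) − L)⁻¹. -/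
section AuxSkew
variable {k : Type*} [CommRing k] {n : ℕ} (q : Fin n → Fin n → kˣ)

lemma skewC_add_left_s15 (a b c : Fin n → ℤ) :
    skewC q (a + b) c = skewC q a c * skewC q b c := by
  simp [skewC, Pi.add_apply, add_mul, zpow_add, Finset.prod_mul_distrib]

lemma skewC_add_right_s15 (a b c : Fin n → ℤ) :
    skewC q a (b + c) = skewC q a b * skewC q a c := by
  simp [skewC, Pi.add_apply, mul_add, zpow_add, Finset.prod_mul_distrib]

lemma skewC_sub_left (a b c : Fin n → ℤ) :
    skewC q (a - b) c = skewC q a c / skewC q b c := by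
  simp [skewC, Pi.sub_apply, sub_mul, zpow_sub, Finset.prod_div_distrib, div_eq_mul_inv, Finset.prod_mul_distrib, Finset.prod_inv_distrib]

lemma skewC_sub_right (a b c : Fin n → ℤ) :
    skewC q a (b - c) = skewC q a b / skewC q a c := by
  simp [skewC, Pi.sub_apply, mul_sub, zpow_sub, Finset.prod_div_distrib, div_eq_mul_inv, Finset.prod_mul_distrib, Finset.prod_inv_distrib]

lemma skewChi_eq (hqii : ∀ i, q i i = 1) (hqsym : ∀ i j, q i j * q j i = 1)
    (a b : Fin n → ℤ) : skewChi q a b = skewC q a b / skewC q b a := by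
  have key : ∀ i : Fin n, ∏ j : Fin n, q i j ^ (a i * b j) =
      (∏ j ∈ Finset.univ.filter (fun j => j < i), q i j ^ (a i * b j)) *
      ∏ j ∈ Finset.univ.filter (fun j => i < j), q i j ^ (a i * b j) := by
    intro i
    rw [← Finset.prod_filter_mul_prod_filter_not Finset.univ (fun j => j < i)]
    congr 1
    have : Finset.univ.filter (fun j => ¬ j < i) =
        insert i (Finset.univ.filter (fun j => i < j)) := by
      ext j
      simp only [Finset.mem_filter, Finset.mem_univ, true_and, not_lt, Finset.mem_insert]
      constructor
      · intro h; rcases h.lt_or_eq with h | h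
        exacts [Or.inr h, Or.inl h.symm]
      · rintro (rfl | h); exacts [le_refl _, h.le]
    rw [this, Finset.prod_insert (by simp), hqii, one_zpow, one_mul]
  have swap : (∏ i : Fin n, ∏ j ∈ Finset.univ.filter (fun j => i < j), q i j ^ (a i * b j)) =
      ∏ i : Fin n, ∏ j ∈ Finset.univ.filter (fun j => j < i), q j i ^ (a j * b i) := by
    exact Finset.prod_comm' (by simp [and_comm])
  have cancel : (∏ i : Fin n, ∏ j ∈ Finset.univ.filter (fun j => j < i), q j i ^ (a j * b i)) *
      skewC q b a = 1 := by
    rw [skewC, ← Finset.prod_mul_distrib]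
    apply Finset.prod_eq_one
    intro i _
    rw [← Finset.prod_mul_distrib]
    apply Finset.prod_eq_one
    intro j _
    rw [mul_comm (a j), ← mul_zpow, mul_comm (q j i), hqsym, one_zpow]
  rw [skewChi]
  simp_rw [key]
  rw [Finset.prod_mul_distrib, swap, eq_inv_of_mul_eq_one_left cancel, div_eq_mul_inv]; rfl

end AuxSkew

/-- the scalar identity proving associativity of the product on the
skew Taylor resolution, with `u = a_V`, `v = a_W`, `w = a_X` and `L = u ⊔ v ⊔ w`. -/
theorem skewC_associativity {k : Type*} [CommRing k] {n : ℕ} (hn : 0 < n)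
    (q : Fin n → Fin n → kˣ)
    (hqii : ∀ i, q i i = 1) (hqsym : ∀ i j, q i j * q j i = 1)
    (u v w : Fin n → ℕ) :
    skewC q (expZ (u ⊔ v)) (expZ w) *
          skewChi q (expZ u + expZ v - expZ (u ⊔ v)) (expZ w) *
          skewC q (expZ u) (expZ v) *
          (skewC q (expZ (u ⊔ v ⊔ w)) (expZ (u ⊔ v) + expZ w - expZ (u ⊔ v ⊔ w)))⁻¹ *
          skewC q (expZ (u ⊔ v) + expZ w - expZ (u ⊔ v ⊔ w))
            (expZ u + expZ v - expZ (u ⊔ v)) *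
          (skewC q (expZ (u ⊔ v)) (expZ u + expZ v - expZ (u ⊔ v)))⁻¹ =
        skewC q (expZ v) (expZ w) * skewC q (expZ u) (expZ (v ⊔ w)) *
          (skewC q (expZ (u ⊔ v ⊔ w)) (expZ u + expZ (v ⊔ w) - expZ (u ⊔ v ⊔ w)))⁻¹ *
          skewC q (expZ u + expZ (v ⊔ w) - expZ (u ⊔ v ⊔ w))
            (expZ v + expZ w - expZ (v ⊔ w)) *
          (skewC q (expZ (v ⊔ w)) (expZ v + expZ w - expZ (v ⊔ w)))⁻¹ ∧
      skewC q (expZ (u ⊔ v)) (expZ w) *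
          skewChi q (expZ u + expZ v - expZ (u ⊔ v)) (expZ w) *
          skewC q (expZ u) (expZ v) *
          (skewC q (expZ (u ⊔ v ⊔ w)) (expZ (u ⊔ v) + expZ w - expZ (u ⊔ v ⊔ w)))⁻¹ *
          skewC q (expZ (u ⊔ v) + expZ w - expZ (u ⊔ v ⊔ w))
            (expZ u + expZ v - expZ (u ⊔ v)) *
          (skewC q (expZ (u ⊔ v)) (expZ u + expZ v - expZ (u ⊔ v)))⁻¹ =
        skewC q (expZ u + expZ v) (expZ w) * skewC q (expZ u) (expZ v) *
          (skewC q (expZ (u ⊔ v ⊔ w))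
            (expZ u + expZ v + expZ w - expZ (u ⊔ v ⊔ w)))⁻¹ := by
  constructor <;>
  · simp only [skewChi_eq q hqii hqsym, skewC_add_left_s15, skewC_add_right_s15, skewC_sub_left,
      skewC_sub_right]
    apply Additive.ofMul.injective
    simp only [ofMul_mul, ofMul_inv, ofMul_div]
    abel
end

section
/- For all u, v ∈ ℕ^n one has χ(u, v)·C(v, u)·C(u ⊔ v, (v + u) − (u ⊔ v))⁻¹ = C(u, v)·C(u ⊔ v, (u + v) − (u ⊔ v))⁻¹. -/
private lemma prod_Ioi_comm' {M : Type*} [CommMonoid M] {n : ℕ} (F : Fin n → Fin n → M) :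
    ∏ i, ∏ j ∈ Finset.Ioi i, F i j = ∏ i, ∏ j ∈ Finset.Iio i, F j i := by
  rw [Finset.prod_sigma', Finset.prod_sigma']
  exact Finset.prod_nbij' (fun p => ⟨p.2, p.1⟩) (fun p => ⟨p.2, p.1⟩)
    (by simp) (by simp) (by simp) (by simp) (by simp)

private lemma chi_mul_C {k : Type*} [CommRing k] {n : ℕ} (q : Fin n → Fin n → kˣ)
    (hqii : ∀ i, q i i = 1) (hqsym : ∀ i j, q i j * q j i = 1)
    (a b : Fin n → ℤ) :
    skewChi q a b * skewC q b a = skewC q a b := by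
  have hfilter : ∀ i : Fin n, Finset.univ.filter (fun j => j < i) = Finset.Iio i := by
    intro i; ext j; simp
  have hinv : ∀ i j, q j i = (q i j)⁻¹ := fun i j =>
    eq_inv_of_mul_eq_one_left (by rw [mul_comm]; exact hqsym i j)
  set g : Fin n → Fin n → kˣ := fun i j => q i j ^ (a i * b j) with hg
  have hchi : skewChi q a b = ∏ i, ∏ j ∈ Finset.Iio i, (g i j * g j i) := by
    have h1 : skewChi q a b
        = ∏ i, ((∏ j ∈ Finset.Ioi i, g i j) * ∏ j ∈ Finset.Iio i, g i j) := by
      unfold skewChi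
      refine Finset.prod_congr rfl fun i _ => ?_
      have hgi : g i i = 1 := by rw [hg]; simp [hqii i]
      have hsplit : Finset.univ.erase i = Finset.Ioi i ∪ Finset.Iio i := by
        ext j
        simp only [Finset.mem_erase, Finset.mem_univ, and_true, Finset.mem_union,
          Finset.mem_Ioi, Finset.mem_Iio]
        constructor
        · exact fun h => (lt_or_gt_of_ne h.symm).imp id id
        · rintro (h | h)
          · exact (ne_of_lt h).symm
          · exact ne_of_lt h
      have hdisj : Disjoint (Finset.Ioi i) (Finset.Iio i) := by
        simp only [Finset.disjoint_left, Finset.mem_Ioi, Finset.mem_Iio]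
        exact fun x h => not_lt.mpr h.le
      rw [← Finset.mul_prod_erase Finset.univ (g i) (Finset.mem_univ i), hgi, one_mul,
        hsplit, Finset.prod_union hdisj]
    rw [h1, Finset.prod_mul_distrib, prod_Ioi_comm' (fun i j => g i j),
      ← Finset.prod_mul_distrib]
    refine Finset.prod_congr rfl fun i _ => ?_
    rw [← Finset.prod_mul_distrib]
    exact Finset.prod_congr rfl fun j _ => mul_comm _ _
  unfold skewC
  rw [hchi]
  simp only [hfilter]
  rw [← Finset.prod_mul_distrib]
  refine Finset.prod_congr rfl fun i _ => ?_
  rw [← Finset.prod_mul_distrib]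
  refine Finset.prod_congr rfl fun j _ => ?_
  rw [hg]
  dsimp only
  rw [hinv i j, inv_zpow, mul_assoc, mul_comm (a j) (b i)]
  simp

/-- the scalar identity showing the product on the skew Taylor
resolution is graded color commutative:
`χ(u, v)·C(v, u)·C(u ⊔ v, (v + u) − (u ⊔ v))⁻¹ = C(u, v)·C(u ⊔ v, (u + v) − (u ⊔ v))⁻¹`. -/
theorem skewC_color_commutativity {k : Type*} [CommRing k] {n : ℕ} (hn : 0 < n)
    (q : Fin n → Fin n → kˣ)
    (hqii : ∀ i, q i i = 1) (hqsym : ∀ i j, q i j * q j i = 1)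
    (u v : Fin n → ℕ) :
    skewChi q (expZ u) (expZ v) * skewC q (expZ v) (expZ u) *
        (skewC q (expZ (u ⊔ v)) (expZ v + expZ u - expZ (u ⊔ v)))⁻¹ =
      skewC q (expZ u) (expZ v) *
        (skewC q (expZ (u ⊔ v)) (expZ u + expZ v - expZ (u ⊔ v)))⁻¹ := by
  rw [add_comm (expZ v) (expZ u), chi_mul_C q hqii hqsym]
end

section
/- Let k be a commutative ring and Q ∈ kˣ with Q² ≠ 1. Take n = 3 and q : Fin 3 → Fin 3 → kˣ given by q 1 2 = Q, q 1 3 = −1, q 2 3 = −Q⁻¹ (with q i i = 1 and q j i = (q i j)⁻¹), the parameters of the skew ring with xy = Qyx, xz = −zx, yz = −Q⁻¹zy. Then χ((2,0,0), γ) = χ((0,0,2), γ) for every γ ∈ ℤ³ (the monomials x² and z² have the same color degree), but C((2,0,0), (0,1,1)) = 1 while C((0,0,2), (0,1,1)) = Q²; in particular C((2,0,0), (0,1,1)) ≠ C((0,0,2), (0,1,1)), so the bicharacter C is not determined by the χ-degree. -/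
/-- in the skew polynomial ring `k_Q[x, y, z]` with `xy = Qyx`,
`xz = −zx`, `yz = −Q⁻¹zy` and `Q² ≠ 1`, the monomials `x²` and `z²` have the same
color (`χ`-)degree, yet `C(x², yz) = 1` while `C(z², yz) = Q²`; so the bicharacter `C`
is not determined by the `χ`-degree. -/
theorem skewC_not_determined_by_color {k : Type*} [CommRing k] (Q : kˣ)
    (hQ : Q ^ 2 ≠ 1) (q : Fin 3 → Fin 3 → kˣ)
    (hqii : ∀ i, q i i = 1) (hqsym : ∀ i j, q j i = (q i j)⁻¹)
    (hq01 : q 0 1 = Q) (hq02 : q 0 2 = -1) (hq12 : q 1 2 = -Q⁻¹) :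
    (∀ γ : Fin 3 → ℤ, skewChi q ![2, 0, 0] γ = skewChi q ![0, 0, 2] γ) ∧
      skewC q ![2, 0, 0] ![0, 1, 1] = 1 ∧
      skewC q ![0, 0, 2] ![0, 1, 1] = Q ^ 2 ∧
      skewC q ![2, 0, 0] ![0, 1, 1] ≠ skewC q ![0, 0, 2] ![0, 1, 1] := by
  have hq10 : q 1 0 = Q⁻¹ := by rw [hqsym, hq01]
  have hq20 : q 2 0 = -1 := by rw [hqsym, hq02]; simp
  have hq21 : q 2 1 = -Q := by rw [hqsym, hq12]; simp
  have hC1 : skewC q ![2, 0, 0] ![0, 1, 1] = 1 := by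
    simp [skewC, Finset.prod_filter, Fin.prod_univ_three, hqii, hq01, hq02, hq10, hq12, hq20, hq21]
  have hC2 : skewC q ![0, 0, 2] ![0, 1, 1] = Q ^ 2 := by
    simp [skewC, Finset.prod_filter, Fin.prod_univ_three, hqii, hq01, hq02, hq10, hq12, hq20, hq21]
  refine ⟨?_, hC1, hC2, ?_⟩
  · intro γ
    simp [skewChi, Fin.prod_univ_three, hqii, hq01, hq02, hq10, hq12, hq20, hq21,
      mul_zpow]

    have h1 : ∀ m : ℤ, ((-1:kˣ)) ^ (2*m) = 1 := fun m => by
      rw [zpow_mul, show (2:ℤ) = ((2:ℕ):ℤ) from rfl, zpow_natCast]; norm_num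
    have h2 : (-Q) ^ (2 * γ 1) = Q ^ (2 * γ 1) := by
      rw [zpow_mul, zpow_mul, show (2:ℤ) = ((2:ℕ):ℤ) from rfl, zpow_natCast, zpow_natCast, neg_sq]
    rw [h1, h1, h2, one_mul, mul_one]
  · rw [hC1, hC2]; exact fun h => hQ h.symm
end
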